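/- arXiv:1604.00609 — 12 statements merged into one kernel-verified Lean document; each statement's English description precedes it below -/
import Mathlib

section
/- Let G be a topological group equipped with a compatible bi-invariant metric d. If a sequence (U_n) of nonempty compact subsets of G, each of which is the underlying set of a subgroup of G, converges in the Hausdorff metric to a nonempty compact set U, then U is the underlying set of a subgroup of G. -/
/-!
A point lies in the Hausdorff limit `L` of compact sets `Uₙ` exactly when it is a limit of
points `xₙ ∈ Uₙ`, both directions coming from the continuity of `(x, K) ↦ infDist x K`. The
group operations are continuous, so products and inverses of such limits are again limits of
points of the subgroups `Uₙ`, and `L` is closed under them.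
-/

open Filter Topology Metric

namespace TopologicalSpace.NonemptyCompacts

variable {α ι : Type*} [MetricSpace α] {l : Filter ι} {U : ι → NonemptyCompacts α}
  {L : NonemptyCompacts α}

theorem exists_tendsto_of_mem (hU : Tendsto U l (𝓝 L)) {a : α} (ha : a ∈ L) :
    ∃ x : ι → α, (∀ i, x i ∈ U i) ∧ Tendsto x l (𝓝 a) := by
  choose x hxU hdist using fun i => (U i).isCompact.exists_infDist_eq_dist (U i).nonempty a
  have hlim : Tendsto (fun i => infDist a (U i)) l (𝓝 (infDist a L)) :=
    ((lipschitz_infDist_set a).continuous.tendsto L).comp hU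
  rw [infDist_zero_of_mem ha] at hlim
  exact ⟨x, hxU, tendsto_iff_dist_tendsto_zero.2 <|
    hlim.congr fun i => (hdist i).trans (dist_comm _ _)⟩

theorem mem_of_tendsto_of_eventually_mem [l.NeBot] (hU : Tendsto U l (𝓝 L)) {x : ι → α}
    {a : α} (hxU : ∀ᶠ i in l, x i ∈ U i) (hx : Tendsto x l (𝓝 a)) : a ∈ L := by
  have hlim : Tendsto (fun i => infDist (x i) (U i)) l (𝓝 (infDist a L)) :=
    ((lipschitz_infDist.continuous.tendsto (a, L)).comp (hx.prodMk_nhds hU) :)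
  have hzero : infDist a L = 0 :=
    tendsto_nhds_unique hlim <|
      tendsto_const_nhds.congr' <| hxU.mono fun i hi => (infDist_zero_of_mem hi).symm
  exact (L.isCompact.isClosed.mem_iff_infDist_zero L.nonempty).2 hzero

end TopologicalSpace.NonemptyCompacts

open TopologicalSpace NonemptyCompacts

theorem limit_of_compact_subgroups_is_subgroup_general
    (G : Type*) [Group G] [MetricSpace G] [IsTopologicalGroup G]
    (U : ℕ → NonemptyCompacts G)
    (hsub : ∀ n, ∃ H : Subgroup G, ((U n : Set G)) = (H : Set G))
    (L : NonemptyCompacts G)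
    (hconv : Filter.Tendsto U Filter.atTop (nhds L)) :
    ∃ H : Subgroup G, (L : Set G) = (H : Set G) := by
  choose H hH using hsub
  have mem_U {n : ℕ} {x : G} : x ∈ U n ↔ x ∈ H n := Set.ext_iff.1 (hH n) x
  refine ⟨{ carrier := L, mul_mem' := ?mul, one_mem' := ?one, inv_mem' := ?inv }, rfl⟩
  case one =>
    exact mem_of_tendsto_of_eventually_mem hconv
      (Eventually.of_forall fun n => mem_U.2 (H n).one_mem) tendsto_const_nhds
  case mul =>
    intro a b ha hb
    obtain ⟨x, hxU, hx⟩ := exists_tendsto_of_mem hconv ha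
    obtain ⟨y, hyU, hy⟩ := exists_tendsto_of_mem hconv hb
    exact mem_of_tendsto_of_eventually_mem hconv
      (Eventually.of_forall fun n => mem_U.2 <| (H n).mul_mem (mem_U.1 (hxU n)) (mem_U.1 (hyU n)))
      (hx.mul hy)
  case inv =>
    intro a ha
    obtain ⟨x, hxU, hx⟩ := exists_tendsto_of_mem hconv ha
    exact mem_of_tendsto_of_eventually_mem hconv
      (Eventually.of_forall fun n => mem_U.2 <| (H n).inv_mem (mem_U.1 (hxU n))) hx.inv

/-- If a sequence of nonempty compact subsets of a topological group `G`, equipped with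
a compatible bi-invariant metric, each of which is the underlying set of a subgroup,
converges in the Hausdorff metric to a nonempty compact set `L`, then `L` is the
underlying set of a subgroup. -/
theorem limit_of_compact_subgroups_is_subgroup
    (G : Type*) [Group G] [MetricSpace G] [IsTopologicalGroup G]
    (hbi : ∀ g x y : G, dist (g * x) (g * y) = dist x y ∧ dist (x * g) (y * g) = dist x y)
    (U : ℕ → NonemptyCompacts G)
    (hsub : ∀ n, ∃ H : Subgroup G, ((U n : Set G)) = (H : Set G))
    (L : NonemptyCompacts G)
    (hconv : Filter.Tendsto U Filter.atTop (nhds L)) :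
    ∃ H : Subgroup G, (L : Set G) = (H : Set G) :=
  limit_of_compact_subgroups_is_subgroup_general G U hsub L hconv
end

section
/- Let G be a topological group equipped with a compatible bi-invariant metric d. Then the collection of nonempty compact subsets of G that are underlying sets of normal subgroups of G is a closed subset of the space of nonempty compact subsets of G with the Hausdorff metric. -/
/-!
In the Hausdorff metric, `(x, K) ↦ infDist x K` is continuous, so membership passes to limits;
conversely every point of a limit `L = lim Kₙ` is a limit of points `zₙ ∈ Kₙ` (nearest points).
Hence any closure condition of a compact set under a continuous operation survives Hausdorff
limits, and being a normal subgroup is a conjunction of such conditions.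
-/

open TopologicalSpace Metric Filter Set Topology

namespace TopologicalSpace.NonemptyCompacts

variable {X : Type*} [MetricSpace X]

theorem isClosed_setOf_mem_prod : IsClosed {p : X × NonemptyCompacts X | p.1 ∈ p.2} := by
  have hmem : ∀ p : X × NonemptyCompacts X, p.1 ∈ p.2 ↔ infDist p.1 (p.2 : Set X) = 0 :=
    fun p => p.2.isCompact.isClosed.mem_iff_infDist_zero p.2.nonempty
  simp only [hmem]
  exact isClosed_eq lipschitz_infDist.continuous continuous_const

theorem isClosed_setOf_mem (x : X) : IsClosed {K : NonemptyCompacts X | x ∈ K} :=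
  isClosed_setOf_mem_prod.preimage (Continuous.prodMk_right x)

variable {K : ℕ → NonemptyCompacts X} {L : NonemptyCompacts X}

theorem mem_of_tendsto (hK : Tendsto K atTop (𝓝 L)) {z : ℕ → X} {x : X}
    (hz : ∀ n, z n ∈ K n) (hzx : Tendsto z atTop (𝓝 x)) : x ∈ L :=
  isClosed_setOf_mem_prod.mem_of_tendsto (hzx.prodMk_nhds hK)
    (.of_forall hz : ∀ᶠ n in atTop, (z n, K n) ∈ _)

theorem exists_tendsto_of_mem_s1 (hK : Tendsto K atTop (𝓝 L)) {x : X} (hx : x ∈ L) :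
    ∃ z : ℕ → X, (∀ n, z n ∈ K n) ∧ Tendsto z atTop (𝓝 x) := by
  choose z hzK hz using fun n => (K n).isCompact.exists_infDist_eq_dist (K n).nonempty x
  refine ⟨z, hzK, tendsto_iff_dist_tendsto_zero.mpr ?_⟩
  have hinf : Tendsto (fun n => infDist x (K n : Set X)) atTop (𝓝 (infDist x (L : Set X))) :=
    ((lipschitz_infDist_set x).continuous.tendsto L).comp hK
  rw [infDist_zero_of_mem hx] at hinf
  simpa only [dist_comm, hz] using hinf

theorem isClosed_setOf_mapsTo {f : X → X} (hf : Continuous f) :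
    IsClosed {K : NonemptyCompacts X | MapsTo f K K} := by
  refine IsSeqClosed.isClosed fun {K L} hKf hK x hx => ?_
  obtain ⟨z, hzK, hzx⟩ := exists_tendsto_of_mem_s1 hK hx
  exact mem_of_tendsto hK (fun n => hKf n (hzK n)) ((hf.tendsto x).comp hzx)

theorem isClosed_setOf_mapsTo_prod {f : X × X → X} (hf : Continuous f) :
    IsClosed {K : NonemptyCompacts X | MapsTo f (K ×ˢ K) K} := by
  refine IsSeqClosed.isClosed fun {K L} hKf hK p hp => ?_
  obtain ⟨z, hzK, hzx⟩ := exists_tendsto_of_mem_s1 hK hp.1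
  obtain ⟨w, hwK, hwy⟩ := exists_tendsto_of_mem_s1 hK hp.2
  exact mem_of_tendsto hK (fun n => hKf n ⟨hzK n, hwK n⟩)
    ((hf.tendsto p).comp (hzx.prodMk_nhds hwy))

end TopologicalSpace.NonemptyCompacts

theorem Subgroup.exists_normal_coe_eq_iff {G : Type*} [Group G] {S : Set G} :
    (∃ H : Subgroup G, H.Normal ∧ S = H) ↔
      1 ∈ S ∧ MapsTo (fun p : G × G => p.1 * p.2) (S ×ˢ S) S ∧ MapsTo (·⁻¹) S S ∧
        ∀ g : G, MapsTo (fun a => g * a * g⁻¹) S S := by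
  constructor
  · rintro ⟨H, hH, rfl⟩
    exact ⟨H.one_mem, fun p hp => H.mul_mem hp.1 hp.2, fun a => H.inv_mem,
      fun g a ha => hH.conj_mem a ha g⟩
  · rintro ⟨h1, hmul, hinv, hconj⟩
    let H : Subgroup G :=
      { carrier := S
        one_mem' := h1
        mul_mem' := fun {a b} ha hb => hmul (mk_mem_prod ha hb : (a, b) ∈ S ×ˢ S)
        inv_mem' := fun ha => hinv ha }
    exact ⟨H, ⟨fun a ha g => hconj g ha⟩, rfl⟩

theorem isClosed_normal_compact_subgroups_general
    (G : Type*) [Group G] [MetricSpace G] [IsTopologicalGroup G] :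
    IsClosed {K : NonemptyCompacts G |
      ∃ H : Subgroup G, H.Normal ∧ (K : Set G) = (H : Set G)} := by
  simp only [Subgroup.exists_normal_coe_eq_iff, ofPred_and, ofPred_forall]
  refine ((NonemptyCompacts.isClosed_setOf_mem 1).inter
    ((NonemptyCompacts.isClosed_setOf_mapsTo_prod continuous_mul).inter
      ((NonemptyCompacts.isClosed_setOf_mapsTo continuous_inv).inter
        (isClosed_iInter fun g => NonemptyCompacts.isClosed_setOf_mapsTo ?_))))
  fun_prop

/-- In a topological group `G` equipped with a compatible bi-invariant metric, the collection
of nonempty compact subsets that are underlying sets of normal subgroups of `G` is closed in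
the hyperspace of nonempty compact subsets of `G` with the Hausdorff metric. -/
theorem isClosed_normal_compact_subgroups
    (G : Type*) [Group G] [MetricSpace G] [IsTopologicalGroup G]
    (hbi : ∀ g x y : G, dist (g * x) (g * y) = dist x y ∧ dist (x * g) (y * g) = dist x y) :
    IsClosed {K : NonemptyCompacts G |
      ∃ H : Subgroup G, H.Normal ∧ (K : Set G) = (H : Set G)} :=
  isClosed_normal_compact_subgroups_general G
end

section
/- Let G be a topological group with a metric d inducing its topology, and let (V_n)_{n∈ℕ} be a descending sequence of open normal subgroups of G such that for all g,h ∈ G and all n, d(g,h) ≤ 2^{-n} if and only if gh^{-1} ∈ V_n. Then for any two compact subgroups R and S of G and any n ∈ ℕ: the Hausdorff distance between (the underlying sets of) R and S is at most 2^{-n} if and only if R·V_n = S·V_n as subsets of G (where A·B = {ab : a ∈ A, b ∈ B}). -/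
/-!
Normality of `Vₙ` makes the closed `2⁻ⁿ`-ball around `b` the coset `b Vₙ`, and by compactness
the distance from a point to `S` is attained, so `infDist x S ≤ 2⁻ⁿ ↔ x ∈ S Vₙ`. The Hausdorff
bound therefore says `R ⊆ S Vₙ` and `S ⊆ R Vₙ`, which, `Vₙ` being a subgroup, is `R Vₙ = S Vₙ`.
-/

open Pointwise Metric

theorem Metric.hausdorffDist_le_iff_forall_infDist_le {α : Type*} [PseudoMetricSpace α]
    {A B : Set α} {r : ℝ} (fin : hausdorffEDist A B ≠ ⊤) (hr : 0 ≤ r) :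
    hausdorffDist A B ≤ r ↔ (∀ x ∈ A, infDist x B ≤ r) ∧ ∀ x ∈ B, infDist x A ≤ r := by
  refine ⟨fun h => ⟨fun x hx => ?_, fun x hx => ?_⟩,
    fun h => hausdorffDist_le_of_infDist hr h.1 h.2⟩
  · exact (infDist_le_hausdorffDist_of_mem hx fin).trans h
  · rw [hausdorffDist_comm] at h
    rw [hausdorffEDist_comm] at fin
    exact (infDist_le_hausdorffDist_of_mem hx fin).trans h

theorem Set.mul_subgroup_subset_mul_subgroup_iff {G : Type*} [Group G] (A B : Set G)
    (V : Subgroup G) : A * V ⊆ B * V ↔ A ⊆ B * V := by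
  refine ⟨fun h => (subset_mul_left A V.one_mem).trans h, fun h => ?_⟩
  calc A * V ⊆ B * V * V := mul_subset_mul_right h
    _ = B * V := by rw [mul_assoc, coe_mul_coe]

section

variable {G : Type*} [Group G] [PseudoMetricSpace G] {V : Subgroup G} {r : ℝ}

theorem nonneg_of_dist_le_iff_mul_inv_mem (hV : ∀ g h : G, dist g h ≤ r ↔ g * h⁻¹ ∈ V) :
    0 ≤ r := by
  simpa using (hV 1 1).2 (by simp)

theorem infDist_le_iff_mem_mul_subgroup [hN : V.Normal]
    (hV : ∀ g h : G, dist g h ≤ r ↔ g * h⁻¹ ∈ V) {B : Set G} (hB : IsCompact B)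
    (hBne : B.Nonempty) (x : G) : infDist x B ≤ r ↔ x ∈ B * V := by
  constructor
  · intro hx
    obtain ⟨b, hb, hxb⟩ := hB.exists_infDist_eq_dist hBne x
    have hbx : b⁻¹ * x ∈ V := hN.mem_comm ((hV x b).1 (hxb ▸ hx))
    exact ⟨b, hb, b⁻¹ * x, hbx, mul_inv_cancel_left b x⟩
  · rintro ⟨b, hb, v, hv, rfl⟩
    have hbv : dist (b * v) b ≤ r := (hV _ _).2 (hN.conj_mem v hv b)
    exact (infDist_le_dist_of_mem hb).trans hbv

theorem hausdorffDist_le_iff_mul_subgroup_eq [V.Normal]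
    (hV : ∀ g h : G, dist g h ≤ r ↔ g * h⁻¹ ∈ V) {A B : Set G} (hA : IsCompact A)
    (hB : IsCompact B) (hAne : A.Nonempty) (hBne : B.Nonempty) :
    hausdorffDist A B ≤ r ↔ A * V = B * V := by
  rw [hausdorffDist_le_iff_forall_infDist_le
      (hausdorffEDist_ne_top_of_nonempty_of_bounded hAne hBne hA.isBounded hB.isBounded)
      (nonneg_of_dist_le_iff_mul_inv_mem hV),
    subset_antisymm_iff, Set.mul_subgroup_subset_mul_subgroup_iff,
    Set.mul_subgroup_subset_mul_subgroup_iff]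
  simp only [infDist_le_iff_mem_mul_subgroup hV hA hAne,
    infDist_le_iff_mem_mul_subgroup hV hB hBne]
  rfl

end

theorem hausdorffDist_le_iff_mul_eq_general
    (G : Type*) [Group G] [MetricSpace G]
    (V : ℕ → Subgroup G)
    (hnormal : ∀ n, (V n).Normal)
    (hd : ∀ g h : G, ∀ n : ℕ, dist g h ≤ (2 : ℝ) ^ (-(n : ℤ)) ↔ g * h⁻¹ ∈ V n)
    (R S : Subgroup G) (hR : IsCompact (R : Set G)) (hS : IsCompact (S : Set G)) (n : ℕ) :
    Metric.hausdorffDist (R : Set G) (S : Set G) ≤ (2 : ℝ) ^ (-(n : ℤ)) ↔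
      (R : Set G) * (V n : Set G) = (S : Set G) * (V n : Set G) := by
  have := hnormal n
  exact hausdorffDist_le_iff_mul_subgroup_eq (hd · · n) hR hS ⟨1, R.one_mem⟩ ⟨1, S.one_mem⟩

/-- If `(Vₙ)` is a descending sequence of open normal subgroups of a metrized topological group
`G` with `dist g h ≤ 2⁻ⁿ ↔ g·h⁻¹ ∈ Vₙ`, then for compact subgroups `R, S` of `G` the Hausdorff
distance between them is at most `2⁻ⁿ` iff `R·Vₙ = S·Vₙ` as subsets of `G`. -/
theorem hausdorffDist_le_iff_mul_eq
    (G : Type*) [Group G] [MetricSpace G] [IsTopologicalGroup G]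
    (V : ℕ → Subgroup G)
    (hopen : ∀ n, IsOpen ((V n : Set G)))
    (hnormal : ∀ n, (V n).Normal)
    (hdesc : ∀ n, V (n + 1) ≤ V n)
    (hd : ∀ g h : G, ∀ n : ℕ, dist g h ≤ (2 : ℝ) ^ (-(n : ℤ)) ↔ g * h⁻¹ ∈ V n)
    (R S : Subgroup G) (hR : IsCompact (R : Set G)) (hS : IsCompact (S : Set G)) (n : ℕ) :
    Metric.hausdorffDist (R : Set G) (S : Set G) ≤ (2 : ℝ) ^ (-(n : ℤ)) ↔
      (R : Set G) * (V n : Set G) = (S : Set G) * (V n : Set G) :=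
  hausdorffDist_le_iff_mul_eq_general G V hnormal hd R S hR hS n
end

section
/- Let G be a profinite group, i.e., a compact Hausdorff totally disconnected topological group. Call a set F of open normal subgroups of G a filter if G ∈ F, F is closed under intersection (L, L' ∈ F implies L ∩ L' ∈ F), and F is upward closed among open normal subgroups (L ∈ F, L ≤ L' with L' an open normal subgroup implies L' ∈ F). Then the map Φ sending a closed normal subgroup R of G to the set Φ(R) = {L : L an open normal subgroup of G with R ≤ L} is a bijection from the set of closed normal subgroups of G onto the set of filters of open normal subgroups of G, and its inverse sends a filter F to the intersection ⋂F. -/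
/-! A closed subgroup `R` of a profinite group is the intersection of the open subgroups
containing it. When `R` is normal, each such open subgroup may be replaced by its normal core,
which is still open because it has finite index; so `R = ⋂ Φ(R)`, and `Φ` is injective.
Conversely, let `F` be a filter and `L` an open normal subgroup containing `⋂ F`. The complements
of the members of `F` cover the compact set `G \ L`, and `F` is directed, so a single `M ∈ F`
already satisfies `M ≤ L`; hence `L ∈ F`. -/

/-- A set `F` of subgroups of a topological group `G` is a filter of open normal subgroups if
all its members are open normal, `G ∈ F`, `F` is closed under intersections, and `F` is upward
closed among open normal subgroups. -/
def IsOpenNormalFilter (G : Type*) [Group G] [TopologicalSpace G]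
    (F : Set (Subgroup G)) : Prop :=
  (∀ L ∈ F, IsOpen (L : Set G) ∧ L.Normal) ∧
  (⊤ : Subgroup G) ∈ F ∧
  (∀ L L' : Subgroup G, L ∈ F → L' ∈ F → L ⊓ L' ∈ F) ∧
  (∀ L L' : Subgroup G, L ∈ F → IsOpen (L' : Set G) → L'.Normal → L ≤ L' → L' ∈ F)

section

variable {G : Type*} [Group G] [TopologicalSpace G]

theorem Subgroup.isOpen_normalCore [SeparatelyContinuousMul G] [CompactSpace G]
    {H : Subgroup G} (hH : IsOpen (H : Set G)) : IsOpen (H.normalCore : Set G) :=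
  have := H.quotient_finite_of_isOpen hH
  have : H.FiniteIndex := Subgroup.finiteIndex_of_finite_quotient
  H.normalCore.isOpen_of_isClosed_of_finiteIndex
    (H.normalCore_isClosed (H.isClosed_of_isOpen hH))

def openNormalSupergroups (R : Subgroup G) : Set (Subgroup G) :=
  {L : Subgroup G | IsOpen (L : Set G) ∧ L.Normal ∧ R ≤ L}

theorem isOpenNormalFilter_openNormalSupergroups (R : Subgroup G) :
    IsOpenNormalFilter G (openNormalSupergroups R) := by
  refine ⟨fun L hL => ⟨hL.1, hL.2.1⟩, ⟨isOpen_univ, inferInstance, le_top⟩, ?_, ?_⟩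
  · rintro L L' ⟨hLo, hLn, hRL⟩ ⟨hL'o, hL'n, hRL'⟩
    exact ⟨hLo.inter hL'o, Subgroup.normal_inf_normal L L', le_inf hRL hRL'⟩
  · rintro L L' ⟨-, -, hRL⟩ hL'o hL'n hLL'
    exact ⟨hL'o, hL'n, hRL.trans hLL'⟩

theorem sInf_openNormalSupergroups [IsTopologicalGroup G] [CompactSpace G]
    [TotallyDisconnectedSpace G] {R : Subgroup G} (hR : IsClosed (R : Set G)) (hRn : R.Normal) :
    sInf (openNormalSupergroups R) = R := by
  refine le_antisymm ?_ (le_sInf fun L hL => hL.2.2)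
  calc sInf (openNormalSupergroups R) ≤ sInf {N : Subgroup G | IsOpen (N : Set G) ∧ R ≤ N} :=
        le_sInf fun N ⟨hNo, hRN⟩ => sInf_le_of_le
          ⟨N.isOpen_normalCore hNo, N.normalCore_normal,
            (Subgroup.normal_le_normalCore (hN := hRn)).mpr hRN⟩
          N.normalCore_le
    _ = R := (ProfiniteGrp.closedSubgroup_eq_sInf_open ⟨R, hR⟩).symm

namespace IsOpenNormalFilter

variable {F : Set (Subgroup G)} (hF : IsOpenNormalFilter G F)
include hF

theorem isClosed_sInf [SeparatelyContinuousMul G] : IsClosed ((sInf F : Subgroup G) : Set G) := by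
  rw [Subgroup.coe_sInf]
  exact isClosed_biInter fun L hL => L.isClosed_of_isOpen (hF.1 L hL).1

theorem normal_sInf : (sInf F).Normal :=
  ⟨fun n hn g => Subgroup.mem_sInf.mpr fun L hL =>
    (hF.1 L hL).2.conj_mem n (Subgroup.mem_sInf.mp hn L hL) g⟩

theorem mem_of_sInf_le [SeparatelyContinuousMul G] [CompactSpace G] {L : Subgroup G}
    (hLo : IsOpen (L : Set G)) (hLn : L.Normal) (hFL : sInf F ≤ L) : L ∈ F := by
  have : Nonempty F := ⟨⟨⊤, hF.2.1⟩⟩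
  have hdir : Directed (· ⊇ ·) fun M : F => ((M : Subgroup G) : Set G) := fun M M' =>
    ⟨⟨_, hF.2.2.1 M M' M.2 M'.2⟩, Set.inter_subset_left, Set.inter_subset_right⟩
  have hdisj : (L : Set G)ᶜ ∩ ⋂ M : F, ((M : Subgroup G) : Set G) = ∅ :=
    Set.eq_empty_iff_forall_notMem.mpr fun x ⟨hxL, hxF⟩ =>
      hxL (hFL (Subgroup.mem_sInf.mpr fun M hM => Set.mem_iInter.mp hxF ⟨M, hM⟩))
  obtain ⟨M, hM⟩ := hLo.isClosed_compl.isCompact.elim_directed_family_closed _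
    (fun M : F => (M : Subgroup G).isClosed_of_isOpen (hF.1 M M.2).1) hdisj hdir
  exact hF.2.2.2 M L M.2 hLo hLn
    (Set.disjoint_compl_left_iff_subset.mp (Set.disjoint_iff_inter_eq_empty.mpr hM))

theorem openNormalSupergroups_sInf [SeparatelyContinuousMul G] [CompactSpace G] :
    openNormalSupergroups (sInf F) = F :=
  Set.ext fun L => ⟨fun ⟨hLo, hLn, hFL⟩ => hF.mem_of_sInf_le hLo hLn hFL,
    fun hL => ⟨(hF.1 L hL).1, (hF.1 L hL).2, sInf_le hL⟩⟩

end IsOpenNormalFilter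

end

theorem closed_normal_subgroups_filter_bijection_general
    (G : Type*) [Group G] [TopologicalSpace G] [IsTopologicalGroup G]
    [CompactSpace G] [TotallyDisconnectedSpace G] :
    (∀ R : Subgroup G, IsClosed (R : Set G) → R.Normal →
        IsOpenNormalFilter G {L : Subgroup G | IsOpen (L : Set G) ∧ L.Normal ∧ R ≤ L}) ∧
    (∀ R S : Subgroup G, IsClosed (R : Set G) → R.Normal → IsClosed (S : Set G) → S.Normal →
        {L : Subgroup G | IsOpen (L : Set G) ∧ L.Normal ∧ R ≤ L} =
          {L : Subgroup G | IsOpen (L : Set G) ∧ L.Normal ∧ S ≤ L} → R = S) ∧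
    (∀ F : Set (Subgroup G), IsOpenNormalFilter G F →
        IsClosed ((sInf F : Subgroup G) : Set G) ∧ (sInf F).Normal ∧
        {L : Subgroup G | IsOpen (L : Set G) ∧ L.Normal ∧ sInf F ≤ L} = F) := by
  refine ⟨fun R _ _ => isOpenNormalFilter_openNormalSupergroups R, ?_,
    fun F hF => ⟨hF.isClosed_sInf, hF.normal_sInf, hF.openNormalSupergroups_sInf⟩⟩
  intro R S hR hRn hS hSn hRS
  rw [← sInf_openNormalSupergroups hR hRn, ← sInf_openNormalSupergroups hS hSn]
  exact congrArg sInf hRS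

/-- For a profinite group `G`, the map `R ↦ {L open normal : R ≤ L}` is a bijection from closed
normal subgroups of `G` onto filters of open normal subgroups of `G`, with inverse `F ↦ ⋂ F`. -/
theorem closed_normal_subgroups_filter_bijection
    (G : Type*) [Group G] [TopologicalSpace G] [IsTopologicalGroup G]
    [CompactSpace G] [T2Space G] [TotallyDisconnectedSpace G] :
    (∀ R : Subgroup G, IsClosed (R : Set G) → R.Normal →
        IsOpenNormalFilter G {L : Subgroup G | IsOpen (L : Set G) ∧ L.Normal ∧ R ≤ L}) ∧
    (∀ R S : Subgroup G, IsClosed (R : Set G) → R.Normal → IsClosed (S : Set G) → S.Normal →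
        {L : Subgroup G | IsOpen (L : Set G) ∧ L.Normal ∧ R ≤ L} =
          {L : Subgroup G | IsOpen (L : Set G) ∧ L.Normal ∧ S ≤ L} → R = S) ∧
    (∀ F : Set (Subgroup G), IsOpenNormalFilter G F →
        IsClosed ((sInf F : Subgroup G) : Set G) ∧ (sInf F).Normal ∧
        {L : Subgroup G | IsOpen (L : Set G) ∧ L.Normal ∧ sInf F ≤ L} = F) :=
  closed_normal_subgroups_filter_bijection_general G
end

section
/- Let X be a Polish space (separable completely metrizable topological space) and let E be an equivalence relation on X that is closed as a subset of X × X. Then E is smooth: there exists a Borel measurable function f : X → ℝ such that for all x, y ∈ X, x E y if and only if f(x) = f(y). -/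
/-!
The complement of `E` is open, so it is covered by countably many basic rectangles `U ×ˢ V`
missing `E`. For such a rectangle, `U` and the `E`-saturation of `V` are disjoint analytic sets.
Alternately separating by a Borel set (Lusin) and saturating, and taking the union of the
resulting increasing sequence, gives an `E`-invariant Borel set containing `U` and missing `V`.
These countably many invariant Borel sets separate the `E`-classes, so recording membership in
them maps `X` into the Cantor space `ι → Bool` with fibres the `E`-classes, and a Borel embedding
of the Cantor space into `ℝ` finishes the proof.
-/

open MeasureTheory Set

theorem MeasureTheory.AnalyticSet.inter {α : Type*} [TopologicalSpace α] [T2Space α]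
    {s t : Set α} (hs : AnalyticSet s) (ht : AnalyticSet t) : AnalyticSet (s ∩ t) := by
  rw [inter_eq_iInter]
  exact AnalyticSet.iInter (Bool.forall_bool.2 ⟨ht, hs⟩)

namespace Relation

variable {X : Type*} {E : X → X → Prop}

def saturation (E : X → X → Prop) (A : Set X) : Set X := {x | ∃ y ∈ A, E x y}

def IsInvariant (E : X → X → Prop) (B : Set X) : Prop := ∀ ⦃x y⦄, E x y → x ∈ B → y ∈ B

theorem isInvariant_saturation (hE : Equivalence E) (A : Set X) :
    IsInvariant E (saturation E A) :=
  fun _ _ hxy ⟨z, hz, hxz⟩ => ⟨z, hz, hE.trans (hE.symm hxy) hxz⟩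

theorem disjoint_saturation_of_isInvariant {A C : Set X} (hC : IsInvariant E C)
    (hAC : Disjoint A C) : Disjoint (saturation E A) C :=
  disjoint_left.2 fun _ ⟨_, hy, hxy⟩ hx => disjoint_left.1 hAC hy (hC hxy hx)

theorem saturation_eq_image_fst (A : Set X) :
    saturation E A = Prod.fst '' ({p : X × X | E p.1 p.2} ∩ Prod.snd ⁻¹' A) := by
  ext x
  constructor
  · rintro ⟨y, hy, hxy⟩
    exact ⟨(x, y), ⟨hxy, hy⟩, rfl⟩
  · rintro ⟨⟨x, y⟩, ⟨hxy, hy⟩, rfl⟩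
    exact ⟨y, hy, hxy⟩

theorem exists_measurable_real_iff_of_countable_separating {ι : Type*} [MeasurableSpace X]
    [Countable ι] (hE : Std.Symm E) {B : ι → Set X}
    (hB : ∀ i, MeasurableSet (B i)) (hBinv : ∀ i, IsInvariant E (B i))
    (hsep : ∀ x y, ¬ E x y → ∃ i, x ∈ B i ∧ y ∉ B i) :
    ∃ f : X → ℝ, Measurable f ∧ ∀ x y, E x y ↔ f x = f y := by
  classical
  let g : X → ι → Bool := fun x i => decide (x ∈ B i)
  have hg : Measurable g :=
    measurable_pi_lambda _ fun i => measurable_to_bool <| by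
      simpa only [g, preimage, mem_singleton_iff, decide_eq_true_eq, ofPred_mem_eq] using hB i
  obtain ⟨e, he⟩ := exists_measurableEmbedding_real (ι → Bool)
  refine ⟨e ∘ g, he.measurable.comp hg, fun x y => ⟨fun hxy => ?_, fun hfxy => ?_⟩⟩
  · have hgxy : g x = g y := funext fun i => by
      simp only [g, decide_eq_decide]
      exact ⟨hBinv i hxy, hBinv i (hE.symm _ _ hxy)⟩
    simp only [Function.comp_apply, hgxy]
  · by_contra hxy
    obtain ⟨i, hx, hy⟩ := hsep x y hxy
    simpa [g, hx, hy] using congrFun (he.injective hfxy) i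

section Polish

variable [TopologicalSpace X] [PolishSpace X]

theorem analyticSet_saturation (hgraph : AnalyticSet {p : X × X | E p.1 p.2}) {A : Set X}
    (hA : AnalyticSet A) : AnalyticSet (saturation E A) := by
  rw [saturation_eq_image_fst]
  exact (hgraph.inter (hA.preimage continuous_snd)).image_of_continuous continuous_fst

variable [MeasurableSpace X] [BorelSpace X]

theorem exists_isInvariant_measurableSet_separating (hE : Std.Symm E)
    (hgraph : AnalyticSet {p : X × X | E p.1 p.2}) {A C : Set X} (hA : AnalyticSet A)
    (hC : AnalyticSet C) (hCinv : IsInvariant E C) (hAC : Disjoint A C) :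
    ∃ B, MeasurableSet B ∧ IsInvariant E B ∧ A ⊆ B ∧ Disjoint B C := by
  let T := {w : Set X // MeasurableSet w ∧ Disjoint w C}
  have hsep : ∀ s, AnalyticSet s → Disjoint s C → ∃ w : T, s ⊆ w.1 := fun s hs hsC =>
    let ⟨w, hsw, hCw, hw⟩ := hs.measurablySeparable hC hsC
    ⟨⟨w, hw, hCw.symm⟩, hsw⟩
  obtain ⟨w₀, hAw₀⟩ := hsep A hA hAC
  choose next hnext using fun w : T =>
    hsep _ (analyticSet_saturation hgraph w.2.1.analyticSet)
      (disjoint_saturation_of_isInvariant hCinv w.2.2)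
  refine ⟨⋃ n, (next^[n] w₀).1, .iUnion fun n => (next^[n] w₀).2.1, ?_,
    subset_iUnion_of_subset 0 hAw₀, disjoint_iUnion_left.2 fun n => (next^[n] w₀).2.2⟩
  intro x y hxy hx
  obtain ⟨n, hn⟩ := mem_iUnion.1 hx
  refine mem_iUnion.2 ⟨n + 1, ?_⟩
  rw [Function.iterate_succ_apply']
  exact hnext _ ⟨x, hn, hE.symm _ _ hxy⟩

theorem exists_isInvariant_measurableSet_of_disjoint_prod (hE : Equivalence E)
    (hgraph : AnalyticSet {p : X × X | E p.1 p.2}) {U V : Set X} (hU : AnalyticSet U)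
    (hV : AnalyticSet V) (hUV : Disjoint (U ×ˢ V) {p : X × X | E p.1 p.2}) :
    ∃ B, MeasurableSet B ∧ IsInvariant E B ∧ U ⊆ B ∧ Disjoint B V := by
  have hU_sat : Disjoint U (saturation E V) :=
    disjoint_left.2 fun _ hx ⟨_, hy, hxy⟩ => disjoint_left.1 hUV (mk_mem_prod hx hy) hxy
  obtain ⟨B, hB, hBinv, hUB, hBV⟩ := exists_isInvariant_measurableSet_separating hE.stdSymm
    hgraph hU (analyticSet_saturation hgraph hV) (isInvariant_saturation hE V) hU_sat
  have hV_sat : V ⊆ saturation E V := fun y hy => ⟨y, hy, hE.refl y⟩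
  exact ⟨B, hB, hBinv, hUB, hBV.mono_right hV_sat⟩

end Polish

end Relation

/-- A closed equivalence relation on a Polish space is smooth: there is a Borel measurable
real-valued function whose fibers are exactly the equivalence classes. -/
theorem closed_equivalence_relation_smooth
    (X : Type*) [TopologicalSpace X] [PolishSpace X] [MeasurableSpace X] [BorelSpace X]
    (E : X → X → Prop) (hE : Equivalence E)
    (hclosed : IsClosed {p : X × X | E p.1 p.2}) :
    ∃ f : X → ℝ, Measurable f ∧ ∀ x y : X, E x y ↔ f x = f y := by
  obtain ⟨b, hbc, -, hb⟩ := TopologicalSpace.exists_countable_basis X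
  let S := {p : Set X × Set X | p ∈ b ×ˢ b ∧ Disjoint (p.1 ×ˢ p.2) {q : X × X | E q.1 q.2}}
  have : Countable S := ((hbc.prod hbc).mono fun _ hp => hp.1).to_subtype
  have hbasic : ∀ U ∈ b, AnalyticSet U := fun U hU => (hb.isOpen hU).measurableSet.analyticSet
  choose B hB hBinv hUB hBV using fun p : S =>
    Relation.exists_isInvariant_measurableSet_of_disjoint_prod hE hclosed.analyticSet
      (hbasic _ p.2.1.1) (hbasic _ p.2.1.2) p.2.2
  refine Relation.exists_measurable_real_iff_of_countable_separating hE.stdSymm hB hBinv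
    fun x y hxy => ?_
  obtain ⟨_, ⟨U, hU, V, hV, rfl⟩, ⟨hx, hy⟩, hUV⟩ :=
    (hb.prod hb).exists_subset_of_mem_open (a := (x, y)) hxy hclosed.isOpen_compl
  exact ⟨⟨(U, V), ⟨hU, hV⟩, subset_compl_iff_disjoint_right.1 hUV⟩, hUB _ hx,
    disjoint_right.1 (hBV _) hy⟩
end

section
/- Let Q be a compact metrizable topological group acting continuously on a Polish space X. Then the orbit equivalence relation of the action is smooth: there exists a Borel measurable function f : X → ℝ such that for all x, y ∈ X, f(x) = f(y) if and only if there exists q ∈ Q with q·x = y. -/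
/-!
The orbit of `x` is the image of the compact group under the continuous map `q ↦ q • x`, so it is
a nonempty compact set, and since this map depends continuously on `x`, the orbit map
`X → NonemptyCompacts X` is continuous for the Vietoris topology. The hyperspace of nonempty
compact subsets of a Polish space is again Polish, so it Borel-embeds into `ℝ`; composing gives a
Borel function whose fibers are exactly the orbits.
-/

open TopologicalSpace MulAction

instance TopologicalSpace.NonemptyCompacts.polishSpace (X : Type*) [TopologicalSpace X]
    [PolishSpace X] : PolishSpace (NonemptyCompacts X) := by
  let := upgradeIsCompletelyMetrizable X
  infer_instance

theorem Continuous.exists_measurable_real_eq_iff {X Y : Type*} [TopologicalSpace X]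
    [MeasurableSpace X] [OpensMeasurableSpace X] [TopologicalSpace Y] [PolishSpace Y]
    {φ : X → Y} (hφ : Continuous φ) :
    ∃ f : X → ℝ, Measurable f ∧ ∀ x y, f x = f y ↔ φ x = φ y := by
  borelize Y
  obtain ⟨g, hg⟩ := MeasureTheory.exists_measurableEmbedding_real Y
  exact ⟨g ∘ φ, hg.measurable.comp hφ.measurable, fun x y => hg.injective.eq_iff⟩

namespace MulAction

section Monoid

variable (M : Type*) {X : Type*} [Monoid M] [TopologicalSpace M] [CompactSpace M]
  [TopologicalSpace X] [MulAction M X] [ContinuousSMul M X]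

def orbitNonemptyCompacts (x : X) : NonemptyCompacts X :=
  (⊤ : NonemptyCompacts M).map (· • x) (continuous_id.smul continuous_const)

@[simp]
theorem coe_orbitNonemptyCompacts (x : X) :
    (orbitNonemptyCompacts M x : Set X) = orbit M x := by
  simp [orbitNonemptyCompacts, orbit]

theorem continuous_orbitNonemptyCompacts : Continuous (orbitNonemptyCompacts M (X := X)) :=
  continuous_const.nonemptyCompacts_map' (g := fun x m => m • x) (by fun_prop)

end Monoid

theorem orbitNonemptyCompacts_eq_iff {G X : Type*} [Group G] [TopologicalSpace G]
    [CompactSpace G] [TopologicalSpace X] [MulAction G X] [ContinuousSMul G X] {x y : X} :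
    orbitNonemptyCompacts G x = orbitNonemptyCompacts G y ↔ ∃ g : G, g • x = y := by
  rw [← SetLike.coe_set_eq, coe_orbitNonemptyCompacts, coe_orbitNonemptyCompacts, eq_comm,
    orbit_eq_iff, mem_orbit_iff]

end MulAction

theorem orbit_equivalence_relation_smooth_general
    (Q X : Type*) [Group Q] [TopologicalSpace Q]
    [CompactSpace Q]
    [TopologicalSpace X] [PolishSpace X] [MeasurableSpace X] [BorelSpace X]
    [MulAction Q X] [ContinuousSMul Q X] :
    ∃ f : X → ℝ, Measurable f ∧ ∀ x y : X, f x = f y ↔ ∃ q : Q, q • x = y := by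
  obtain ⟨f, hf, hf_eq⟩ :=
    (continuous_orbitNonemptyCompacts Q (X := X)).exists_measurable_real_eq_iff
  exact ⟨f, hf, fun x y => (hf_eq x y).trans orbitNonemptyCompacts_eq_iff⟩

/-- The orbit equivalence relation of a continuous action of a compact metrizable topological
group on a Polish space is smooth: some Borel measurable real-valued function has the orbits as
its fibers. -/
theorem orbit_equivalence_relation_smooth
    (Q X : Type*) [Group Q] [TopologicalSpace Q] [IsTopologicalGroup Q]
    [CompactSpace Q] [TopologicalSpace.MetrizableSpace Q]
    [TopologicalSpace X] [PolishSpace X] [MeasurableSpace X] [BorelSpace X]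
    [MulAction Q X] [ContinuousSMul Q X] :
    ∃ f : X → ℝ, Measurable f ∧ ∀ x y : X, f x = f y ↔ ∃ q : Q, q • x = y :=
  orbit_equivalence_relation_smooth_general Q X
end

section
/- There exist finitely generated, residually finite groups G and H that are not isomorphic as groups but whose profinite completions are isomorphic as topological groups. -/
/-!
Baumslag's examples `G_u = ZMod 25 ⋊_u ℤ`, with `u = 11` and `u = 11 ^ 3 = 6` of order 5 in
`(ZMod 25)ˣ`. An isomorphism `G_u ≃* G_{u'}` must send the torsion subgroup `ZMod 25` to itself and
the generator of `ℤ` to one of `±1` modulo torsion, which forces `u' = u ^ {±1}`; this fails for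
`6` and `11`. On the other hand the subgroups `c ℤ` with `5 ∣ c` are cofinal among the finite-index
normal subgroups, and `(a, m) ↦ (a, w m)` identifies `G_6 / c ℤ` with `G_11 / c ℤ` whenever
`11 ^ w = 6` and `w` is prime to `c`. Choosing `w ≡ 3` modulo the `5`-part of `c` and `w ≡ 1` modulo
the rest makes these identifications compatible, i.e. `w` is a unit of `ℤ̂` (not one of `ℤ`), and
they assemble into an isomorphism of the profinite completions.
-/

/-- The finite-index normal subgroups of a group `G`. -/
def FiniteIndexNormal (G : Type*) [Group G] : Type _ :=
  {N : Subgroup G // N.Normal ∧ N.index ≠ 0}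

instance {G : Type*} [Group G] (N : FiniteIndexNormal G) : N.1.Normal := N.2.1

/-- Each finite quotient carries the discrete topology. -/
instance {G : Type*} [Group G] (N : FiniteIndexNormal G) :
    TopologicalSpace (G ⧸ N.1) := ⊥

/-- The natural projection `G/N → G/M` for `N ≤ M`. -/
def finiteQuotientMap {G : Type*} [Group G] {N M : FiniteIndexNormal G} (h : N.1 ≤ M.1) :
    G ⧸ N.1 →* G ⧸ M.1 :=
  QuotientGroup.map N.1 M.1 (MonoidHom.id G) (fun _ hg => h hg)

/-- The profinite completion of `G`: the subgroup of `∏_N G/N` (over all finite-index normal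
subgroups `N`, each `G/N` discrete, product topology) consisting of compatible families. -/
def ProfiniteCompletion (G : Type*) [Group G] :
    Subgroup (∀ N : FiniteIndexNormal G, G ⧸ N.1) where
  carrier := {x | ∀ (N M : FiniteIndexNormal G) (h : N.1 ≤ M.1),
    finiteQuotientMap h (x N) = x M}
  one_mem' := by intro N M h; simp
  mul_mem' := by
    intro x y hx hy N M h
    simp only [Pi.mul_apply, map_mul, hx N M h, hy N M h]
  inv_mem' := by
    intro x hx N M h
    simp only [Pi.inv_apply, map_inv, hx N M h]

/-- A group is residually finite if every nontrivial element avoids some finite-index normal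
subgroup. -/
def ResiduallyFinite (G : Type*) [Group G] : Prop :=
  ∀ g : G, g ≠ 1 → ∃ N : Subgroup G, N.Normal ∧ N.index ≠ 0 ∧ g ∉ N

lemma finiteQuotientMap_refl {G : Type*} [Group G] {N : FiniteIndexNormal G} (q : G ⧸ N.1) :
    finiteQuotientMap (le_refl N.1) q = q := by
  induction q using QuotientGroup.induction_on with
  | H g => rfl

lemma finiteQuotientMap_finiteQuotientMap {G : Type*} [Group G] {N M L : FiniteIndexNormal G}
    (h₁ : N.1 ≤ M.1) (h₂ : M.1 ≤ L.1) (q : G ⧸ N.1) :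
    finiteQuotientMap h₂ (finiteQuotientMap h₁ q) = finiteQuotientMap (h₁.trans h₂) q := by
  induction q using QuotientGroup.induction_on with
  | H g => rfl

instance {G : Type*} [Group G] (N : FiniteIndexNormal G) : DiscreteTopology (G ⧸ N.1) :=
  ⟨rfl⟩

namespace ProfiniteCompletion

variable {G H P : Type*} [Group G] [Group H] [Group P]

def eval (N : FiniteIndexNormal G) : ProfiniteCompletion G →* G ⧸ N.1 :=
  (Pi.evalMonoidHom (fun N : FiniteIndexNormal G => G ⧸ N.1) N).comp
    (ProfiniteCompletion G).subtype

lemma continuous_eval (N : FiniteIndexNormal G) : Continuous (eval N) :=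
  (continuous_apply N).comp continuous_subtype_val

lemma finiteQuotientMap_eval {N M : FiniteIndexNormal G} (h : N.1 ≤ M.1)
    (x : ProfiniteCompletion G) : finiteQuotientMap h (eval N x) = eval M x :=
  x.2 N M h

@[ext] lemma ext {x y : ProfiniteCompletion G} (h : ∀ N, eval N x = eval N y) : x = y :=
  Subtype.ext (funext h)

lemma continuous_comp_eval {X : Type*} [TopologicalSpace X] (N : FiniteIndexNormal G)
    (f : G ⧸ N.1 → X) : Continuous fun x => f (eval N x) :=
  continuous_of_discreteTopology.comp (continuous_eval N)

def lift (f : ∀ M : FiniteIndexNormal H, P →* H ⧸ M.1)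
    (hf : ∀ (M M' : FiniteIndexNormal H) (h : M.1 ≤ M'.1) (x : P),
      finiteQuotientMap h (f M x) = f M' x) :
    P →* ProfiniteCompletion H :=
  (MonoidHom.pi f).codRestrict _ fun x M M' h => hf M M' h x

lemma continuous_lift [TopologicalSpace P] (f : ∀ M : FiniteIndexNormal H, P →* H ⧸ M.1) hf
    (hcont : ∀ M, Continuous (f M)) : Continuous (lift f hf) :=
  (continuous_pi hcont).subtype_mk _

end ProfiniteCompletion

/-- `w` represents an element of `ℤ̂ = lim ℤ/c`. -/
def IsCompatibleExponents (w : ℕ → ℤ) : Prop :=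
  ∀ ⦃c d : ℕ⦄, c ∣ d → d ≠ 0 → w d ≡ w c [ZMOD c]

lemma IsCompatibleExponents.of_mul_modEq_one {w w' : ℕ → ℤ} (hw : IsCompatibleExponents w)
    (hinv : ∀ c : ℕ, c ≠ 0 → w c * w' c ≡ 1 [ZMOD c]) : IsCompatibleExponents w' := by
  intro c d hcd hd
  have hc : c ≠ 0 := ne_zero_of_dvd_ne_zero hd hcd
  have hd' : w d * w' d ≡ 1 [ZMOD c] := (hinv d hd).of_dvd (Int.natCast_dvd_natCast.mpr hcd)
  calc w' d = 1 * w' d := (one_mul _).symm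
    _ ≡ (w' c * w c) * w' d [ZMOD c] := by
        rw [mul_comm (w' c)]; exact ((hinv c hc).symm.mul_right _)
    _ = w' c * (w c * w' d) := mul_assoc _ _ _
    _ ≡ w' c * (w d * w' d) [ZMOD c] := ((hw hcd hd).symm.mul_right _).mul_left _
    _ ≡ w' c * 1 [ZMOD c] := hd'.mul_left _
    _ = w' c := mul_one _

lemma mul_gcdA_modEq_one {a : ℤ} {c : ℕ} (h : IsCoprime a c) : a * Int.gcdA a c ≡ 1 [ZMOD c] := by
  have := Int.gcd_eq_gcd_ab a c
  rw [Int.isCoprime_iff_gcd_eq_one.mp h, Nat.cast_one] at this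
  exact (Int.modEq_iff_dvd.mpr ⟨-Int.gcdB a c, by rw [this]; ring⟩).symm

lemma zpow_eq_zpow_of_modEq {G : Type*} [Group G] {g : G} {p : ℕ} (hg : g ^ p = 1) {a b : ℤ}
    (h : a ≡ b [ZMOD p]) : g ^ a = g ^ b := by
  rw [zpow_eq_zpow_emod' a hg, zpow_eq_zpow_emod' b hg, h.eq]

lemma coprime_ordProj_ordCompl {p : ℕ} (hp : p.Prime) (c : ℕ) :
    Nat.Coprime (ordProj[p] c) (ordCompl[p] c) := by
  rcases eq_or_ne c 0 with rfl | hc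
  · simp
  · exact (Nat.coprime_ordCompl hp hc).pow_left _

def crtExponent {p : ℕ} (hp : p.Prime) (k c : ℕ) : ℕ :=
  Nat.chineseRemainder (coprime_ordProj_ordCompl hp c) k 1

section crtExponent

variable {p : ℕ} (hp : p.Prime) (k : ℕ)

lemma crtExponent_modEq_ordProj (c : ℕ) : crtExponent hp k c ≡ k [MOD ordProj[p] c] :=
  (Nat.chineseRemainder _ _ _).2.1

lemma crtExponent_modEq_ordCompl (c : ℕ) : crtExponent hp k c ≡ 1 [MOD ordCompl[p] c] :=
  (Nat.chineseRemainder _ _ _).2.2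

lemma crtExponent_modEq_of_dvd {c : ℕ} (hpc : p ∣ c) (hc : c ≠ 0) :
    crtExponent hp k c ≡ k [MOD p] :=
  (crtExponent_modEq_ordProj hp k c).of_dvd
    (dvd_pow_self p (hp.factorization_pos_of_dvd hc hpc).ne')

lemma isCompatibleExponents_crtExponent :
    IsCompatibleExponents fun c => (crtExponent hp k c : ℤ) := by
  intro c d hcd hd
  rw [Int.natCast_modEq_iff]
  suffices h : crtExponent hp k d ≡ crtExponent hp k c [MOD ordProj[p] c * ordCompl[p] c] by
    rwa [Nat.ordProj_mul_ordCompl_eq_self] at h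
  refine (Nat.modEq_and_modEq_iff_modEq_mul (coprime_ordProj_ordCompl hp c)).mp ⟨?_, ?_⟩
  · exact ((crtExponent_modEq_ordProj hp k d).of_dvd
      (Nat.ordProj_dvd_ordProj_of_dvd hd hcd p)).trans (crtExponent_modEq_ordProj hp k c).symm
  · exact ((crtExponent_modEq_ordCompl hp k d).of_dvd
      (Nat.ordCompl_dvd_ordCompl_of_dvd hcd p)).trans (crtExponent_modEq_ordCompl hp k c).symm

lemma coprime_crtExponent (hk : ¬ p ∣ k) (c : ℕ) : Nat.Coprime (crtExponent hp k c) c := by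
  suffices h : Nat.Coprime (crtExponent hp k c) (ordProj[p] c * ordCompl[p] c) by
    rwa [Nat.ordProj_mul_ordCompl_eq_self] at h
  refine Nat.Coprime.mul_right ?_ ?_
  · rw [Nat.Coprime, (crtExponent_modEq_ordProj hp k c).gcd_eq]
    exact ((hp.coprime_iff_not_dvd.mpr hk).symm.pow_right _)
  · rw [Nat.Coprime, (crtExponent_modEq_ordCompl hp k c).gcd_eq]
    exact Nat.gcd_one_left _

end crtExponent

/-- `ZMod n ⋊ ℤ`, where `1 : ℤ` acts on `ZMod n` by multiplication by `u`. -/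
@[ext] structure ZModSemidirect (n : ℕ) (u : (ZMod n)ˣ) where
  left : ZMod n
  right : ℤ

namespace ZModSemidirect

variable {n : ℕ} {u : (ZMod n)ˣ}

instance : Mul (ZModSemidirect n u) :=
  ⟨fun x y => ⟨x.left + (u ^ x.right : (ZMod n)ˣ) * y.left, x.right + y.right⟩⟩

instance : One (ZModSemidirect n u) := ⟨⟨0, 0⟩⟩

instance : Inv (ZModSemidirect n u) :=
  ⟨fun x => ⟨-((u ^ (-x.right) : (ZMod n)ˣ) * x.left), -x.right⟩⟩

@[simp] lemma mul_left (x y : ZModSemidirect n u) :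
    (x * y).left = x.left + (u ^ x.right : (ZMod n)ˣ) * y.left := rfl
@[simp] lemma mul_right (x y : ZModSemidirect n u) : (x * y).right = x.right + y.right := rfl
@[simp] lemma one_left : (1 : ZModSemidirect n u).left = 0 := rfl
@[simp] lemma one_right : (1 : ZModSemidirect n u).right = 0 := rfl
@[simp] lemma inv_left (x : ZModSemidirect n u) :
    x⁻¹.left = -((u ^ (-x.right) : (ZMod n)ˣ) * x.left) := rfl
@[simp] lemma inv_right (x : ZModSemidirect n u) : x⁻¹.right = -x.right := rfl

instance : Group (ZModSemidirect n u) :=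
  Group.ofLeftAxioms
    (fun x y z => by ext <;> simp [zpow_add, mul_add] <;> ring)
    (fun x => by ext <;> simp)
    (fun x => by ext <;> simp)

def rightHom : ZModSemidirect n u →* Multiplicative ℤ where
  toFun x := .ofAdd x.right
  map_one' := rfl
  map_mul' _ _ := rfl

def inl : Multiplicative (ZMod n) →* ZModSemidirect n u where
  toFun a := ⟨a.toAdd, 0⟩
  map_one' := rfl
  map_mul' _ _ := by ext <;> simp

def inr : Multiplicative ℤ →* ZModSemidirect n u where
  toFun m := ⟨0, m.toAdd⟩
  map_one' := rfl
  map_mul' _ _ := by ext <;> simp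

@[simp] lemma pow_right (x : ZModSemidirect n u) (k : ℕ) : (x ^ k).right = k * x.right := by
  change Multiplicative.toAdd (rightHom (x ^ k)) = _
  rw [map_pow, toAdd_pow, nsmul_eq_mul]
  rfl

@[simp] lemma zpow_right (x : ZModSemidirect n u) (k : ℤ) : (x ^ k).right = k * x.right := by
  change Multiplicative.toAdd (rightHom (x ^ k)) = _
  rw [map_zpow, toAdd_zpow, zsmul_eq_mul]
  rfl

lemma right_eq_zero_of_pow_eq_one {x : ZModSemidirect n u} {k : ℕ} (hk : k ≠ 0)
    (h : x ^ k = 1) : x.right = 0 := by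
  have := congrArg right h
  simp only [pow_right, one_right, mul_eq_zero, Nat.cast_eq_zero] at this
  exact this.resolve_left hk

lemma mk_zero_pow (a : ZMod n) (k : ℕ) :
    (⟨a, 0⟩ : ZModSemidirect n u) ^ k = ⟨k * a, 0⟩ := by
  change inl (Multiplicative.ofAdd a) ^ k = inl (Multiplicative.ofAdd ((k : ZMod n) * a))
  rw [← map_pow, ← ofAdd_nsmul, nsmul_eq_mul]

lemma zero_mk_zpow (m k : ℤ) : (⟨0, m⟩ : ZModSemidirect n u) ^ k = ⟨0, k * m⟩ := by
  change inr (Multiplicative.ofAdd m) ^ k = inr (Multiplicative.ofAdd (k * m))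
  rw [← map_zpow, ← ofAdd_zsmul, smul_eq_mul]

lemma eq_mk_mul_mk (x : ZModSemidirect n u) : x = ⟨x.left, 0⟩ * ⟨0, x.right⟩ := by
  ext <;> simp

lemma conj_eq (g x : ZModSemidirect n u) :
    g * x * g⁻¹ = ⟨g.left + (u ^ g.right : (ZMod n)ˣ) * x.left
      - (u ^ x.right : (ZMod n)ˣ) * g.left, x.right⟩ := by
  have h : ((u ^ (g.right + x.right) : (ZMod n)ˣ) : ZMod n) * (u ^ (-g.right) : (ZMod n)ˣ) =
      (u ^ x.right : (ZMod n)ˣ) := by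
    rw [← Units.val_mul, ← zpow_add, add_neg_cancel_comm]
  ext
  · simp only [mul_left, mul_right, inv_left]
    linear_combination (-g.left) * h
  · simp

def zmultiplesRight (u : (ZMod n)ˣ) (c : ℕ) : Subgroup (ZModSemidirect n u) where
  carrier := {x | x.left = 0 ∧ (c : ℤ) ∣ x.right}
  one_mem' := ⟨rfl, dvd_zero _⟩
  mul_mem' := by
    rintro x y ⟨hx, hx'⟩ ⟨hy, hy'⟩
    exact ⟨by simp [hx, hy], dvd_add hx' hy'⟩
  inv_mem' := by
    rintro x ⟨hx, hx'⟩
    exact ⟨by simp [hx], hx'.neg_right⟩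

lemma zmultiplesRight_normal {c : ℕ} (hc : u ^ c = 1) : (zmultiplesRight u c).Normal := by
  constructor
  rintro x ⟨hx, j, hj⟩ g
  have hux : u ^ x.right = 1 := by rw [hj, zpow_mul, zpow_natCast, hc, one_zpow]
  rw [conj_eq]
  exact ⟨by simp [hx, hux], j, hj⟩

lemma zmultiplesRight_le_zmultiplesRight {c d : ℕ} (h : c ∣ d) :
    zmultiplesRight u d ≤ zmultiplesRight u c :=
  fun _ hx => ⟨hx.1, (Int.natCast_dvd_natCast.mpr h).trans hx.2⟩

lemma zmultiplesRight_le {M : Subgroup (ZModSemidirect n u)} [M.Normal] {c : ℕ}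
    (h : M.index ∣ c) : zmultiplesRight u c ≤ M := by
  rintro x ⟨hx, j, hj⟩
  obtain ⟨i, rfl⟩ := h
  have hgen : (⟨0, 1⟩ : ZModSemidirect n u) ^ (M.index : ℤ) ∈ M := by
    rw [zpow_natCast]
    exact M.pow_index_mem _
  convert M.zpow_mem hgen (i * j) using 1
  rw [zero_mk_zpow, zero_mk_zpow, eq_mk_mul_mk x, hx, hj]
  ext <;> simp
  ring

lemma mk_eq_mk_of_left_eq {c : ℕ} {x y : ZModSemidirect n u} (h : x.left = y.left)
    (hc : (c : ℤ) ∣ y.right - x.right) :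
    (x : ZModSemidirect n u ⧸ zmultiplesRight u c) = y := by
  refine QuotientGroup.eq.mpr ⟨?_, ?_⟩
  · simp [h]
  · simpa [neg_add_eq_sub] using hc

lemma finite_quotient_zmultiplesRight [NeZero n] {c : ℕ} (hc : c ≠ 0) :
    Finite (ZModSemidirect n u ⧸ zmultiplesRight u c) := by
  have : NeZero c := ⟨hc⟩
  refine Finite.of_surjective (fun p : ZMod n × ZMod c =>
    ((⟨p.1, (p.2.val : ℤ)⟩ : ZModSemidirect n u) : ZModSemidirect n u ⧸ zmultiplesRight u c)) ?_
  rintro ⟨x⟩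
  refine ⟨(x.left, x.right), mk_eq_mk_of_left_eq rfl ?_⟩
  rw [ZMod.val_intCast]
  exact Int.dvd_self_sub_emod

lemma index_zmultiplesRight_ne_zero [NeZero n] {c : ℕ} (hc : c ≠ 0) :
    (zmultiplesRight u c).index ≠ 0 :=
  have := finite_quotient_zmultiplesRight (u := u) hc
  Subgroup.index_ne_zero_of_finite

lemma mk_zero_eq_pow [NeZero n] (a : ZMod n) :
    (⟨a, 0⟩ : ZModSemidirect n u) = ⟨1, 0⟩ ^ a.val := by
  rw [mk_zero_pow, ZMod.natCast_zmod_val, mul_one]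

lemma closure_eq_top [NeZero n] :
    Subgroup.closure {⟨1, 0⟩, ⟨0, 1⟩} = (⊤ : Subgroup (ZModSemidirect n u)) := by
  refine eq_top_iff.mpr fun x _ => ?_
  have hright : (⟨0, x.right⟩ : ZModSemidirect n u) = ⟨0, 1⟩ ^ x.right := by
    rw [zero_mk_zpow, mul_one]
  rw [eq_mk_mul_mk x, mk_zero_eq_pow x.left, hright]
  exact mul_mem (pow_mem (Subgroup.subset_closure (by simp)) _)
    (zpow_mem (Subgroup.subset_closure (by simp)) _)

lemma fg [NeZero n] : Group.FG (ZModSemidirect n u) :=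
  Group.fg_iff.mpr ⟨_, closure_eq_top, Set.toFinite _⟩

lemma residuallyFinite [NeZero n] : ResiduallyFinite (ZModSemidirect n u) := by
  intro x hx
  set c := orderOf u * (x.right.natAbs + 1)
  have hc : c ≠ 0 := mul_ne_zero (orderOf_pos u).ne' (Nat.succ_ne_zero _)
  refine ⟨zmultiplesRight u c,
    zmultiplesRight_normal (by rw [pow_mul, pow_orderOf_eq_one, one_pow]),
    index_zmultiplesRight_ne_zero hc, fun ⟨hleft, hdvd⟩ => hx ?_⟩
  have hright : x.right = 0 := by
    refine Int.eq_zero_of_dvd_of_natAbs_lt_natAbs hdvd ?_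
    rw [Int.natAbs_natCast]
    exact lt_of_lt_of_le (Nat.lt_succ_self _) (Nat.le_mul_of_pos_left _ (orderOf_pos u))
  ext <;> simp [hleft, hright]

section Completion

variable {p : ℕ} [NeZero n] [NeZero p] {u' : (ZMod n)ˣ}

def levelSubgroup (hu : u ^ p = 1) (c : ℕ) (hc : c ≠ 0) : FiniteIndexNormal (ZModSemidirect n u) :=
  ⟨zmultiplesRight u (p * c), zmultiplesRight_normal (by rw [pow_mul, hu, one_pow]),
    index_zmultiplesRight_ne_zero (mul_ne_zero (NeZero.ne p) hc)⟩

lemma levelSubgroup_le (hu : u ^ p = 1) (M : FiniteIndexNormal (ZModSemidirect n u)) :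
    (levelSubgroup hu M.1.index M.2.2).1 ≤ M.1 :=
  zmultiplesRight_le (dvd_mul_left _ _)

lemma levelSubgroup_le_levelSubgroup (hu : u ^ p = 1) {c d : ℕ} (hcd : c ∣ d) (hc : c ≠ 0)
    (hd : d ≠ 0) : (levelSubgroup hu d hd).1 ≤ (levelSubgroup hu c hc).1 :=
  zmultiplesRight_le_zmultiplesRight (mul_dvd_mul_left p hcd)

def scale (w : ℤ) (hw : u' ^ w = u) : ZModSemidirect n u →* ZModSemidirect n u' where
  toFun x := ⟨x.left, w * x.right⟩
  map_one' := by ext <;> simp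
  map_mul' x y := by ext <;> simp [zpow_mul, hw, mul_add]

section Scale

variable (hu : u ^ p = 1) (hu' : u' ^ p = 1)

def scaleQuot {w : ℤ} (hw : u' ^ w = u) (c : ℕ) (hc : c ≠ 0) :
    ZModSemidirect n u ⧸ (levelSubgroup hu c hc).1 →*
      ZModSemidirect n u' ⧸ (levelSubgroup hu' c hc).1 :=
  QuotientGroup.map _ _ (scale w hw) fun _ hx => ⟨hx.1, hx.2.mul_left w⟩

lemma finiteQuotientMap_scaleQuot {c d : ℕ} (hcd : c ∣ d) (hc : c ≠ 0) (hd : d ≠ 0)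
    {w w' : ℤ} (hw : u' ^ w = u) (hw' : u' ^ w' = u) (hww' : w' ≡ w [ZMOD (p * c : ℕ)])
    (q : ZModSemidirect n u ⧸ (levelSubgroup hu d hd).1) :
    finiteQuotientMap (levelSubgroup_le_levelSubgroup hu' hcd hc hd)
        (scaleQuot hu hu' hw' d hd q) =
      scaleQuot hu hu' hw c hc
        (finiteQuotientMap (levelSubgroup_le_levelSubgroup hu hcd hc hd) q) := by
  induction q using QuotientGroup.induction_on with
  | H x =>
    refine mk_eq_mk_of_left_eq rfl ?_
    change _ ∣ w * x.right - w' * x.right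
    rw [← sub_mul]
    exact hww'.dvd.mul_right _

lemma scaleQuot_scaleQuot {w w' : ℤ} (hw : u' ^ w = u) (hw' : u ^ w' = u') (c : ℕ) (hc : c ≠ 0)
    (hinv : w * w' ≡ 1 [ZMOD (p * c : ℕ)]) (q : ZModSemidirect n u ⧸ (levelSubgroup hu c hc).1) :
    scaleQuot hu' hu hw' c hc (scaleQuot hu hu' hw c hc q) = q := by
  induction q using QuotientGroup.induction_on with
  | H x =>
    refine mk_eq_mk_of_left_eq rfl ?_
    change _ ∣ x.right - w' * (w * x.right)
    rw [← mul_assoc, mul_comm w', ← one_sub_mul]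
    exact hinv.dvd.mul_right _

variable (w : ℕ → ℤ) (hw : ∀ c : ℕ, c ≠ 0 → u' ^ w (p * c) = u)

noncomputable def scaleCoord (M : FiniteIndexNormal (ZModSemidirect n u')) :
    ProfiniteCompletion (ZModSemidirect n u) →* ZModSemidirect n u' ⧸ M.1 :=
  (finiteQuotientMap (levelSubgroup_le hu' M)).comp ((scaleQuot hu hu' (hw _ M.2.2) _ M.2.2).comp
    (ProfiniteCompletion.eval (levelSubgroup hu _ M.2.2)))

variable {w}

lemma finiteQuotientMap_scaleQuot_eval (hwc : IsCompatibleExponents w)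
    (x : ProfiniteCompletion (ZModSemidirect n u)) {M : FiniteIndexNormal (ZModSemidirect n u')}
    {c d : ℕ} (hcd : c ∣ d) (hc : c ≠ 0) (hd : d ≠ 0) (hle : (levelSubgroup hu' c hc).1 ≤ M.1) :
    finiteQuotientMap hle
        (scaleQuot hu hu' (hw c hc) c hc (ProfiniteCompletion.eval (levelSubgroup hu c hc) x)) =
      finiteQuotientMap ((levelSubgroup_le_levelSubgroup hu' hcd hc hd).trans hle)
        (scaleQuot hu hu' (hw d hd) d hd (ProfiniteCompletion.eval (levelSubgroup hu d hd) x)) := by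
  rw [← ProfiniteCompletion.finiteQuotientMap_eval (levelSubgroup_le_levelSubgroup hu hcd hc hd),
    ← finiteQuotientMap_scaleQuot hu hu' hcd hc hd _ _
      (hwc (mul_dvd_mul_left p hcd) (mul_ne_zero (NeZero.ne p) hd)),
    finiteQuotientMap_finiteQuotientMap]

lemma scaleCoord_eq (hwc : IsCompatibleExponents w) (x : ProfiniteCompletion (ZModSemidirect n u))
    (M : FiniteIndexNormal (ZModSemidirect n u')) {c : ℕ} (hc : c ≠ 0)
    (hle : (levelSubgroup hu' c hc).1 ≤ M.1) :
    scaleCoord hu hu' w hw M x = finiteQuotientMap hle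
      (scaleQuot hu hu' (hw c hc) c hc (ProfiniteCompletion.eval (levelSubgroup hu c hc) x)) := by
  have hd : M.1.index * c ≠ 0 := mul_ne_zero M.2.2 hc
  exact (finiteQuotientMap_scaleQuot_eval hu hu' hw hwc x (dvd_mul_right _ c) M.2.2 hd
    (levelSubgroup_le hu' M)).trans
    (finiteQuotientMap_scaleQuot_eval hu hu' hw hwc x (dvd_mul_left c _) hc hd hle).symm

noncomputable def scaleCompletion (hwc : IsCompatibleExponents w) :
    ProfiniteCompletion (ZModSemidirect n u) →* ProfiniteCompletion (ZModSemidirect n u') :=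
  ProfiniteCompletion.lift (scaleCoord hu hu' w hw) fun M M' h x => by
    rw [scaleCoord_eq hu hu' hw hwc x M' M.2.2 ((levelSubgroup_le hu' M).trans h)]
    exact finiteQuotientMap_finiteQuotientMap (levelSubgroup_le hu' M) h _

lemma continuous_scaleCompletion (hwc : IsCompatibleExponents w) :
    Continuous (scaleCompletion hu hu' hw hwc) :=
  ProfiniteCompletion.continuous_lift _ _ fun M =>
    ProfiniteCompletion.continuous_comp_eval _ fun q => finiteQuotientMap (levelSubgroup_le hu' M)
      (scaleQuot hu hu' (hw _ M.2.2) _ M.2.2 q)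

lemma scaleCompletion_scaleCompletion (hwc : IsCompatibleExponents w) {w' : ℕ → ℤ}
    (hw' : ∀ c : ℕ, c ≠ 0 → u ^ w' (p * c) = u') (hw'c : IsCompatibleExponents w')
    (hinv : ∀ c : ℕ, c ≠ 0 → w c * w' c ≡ 1 [ZMOD c])
    (x : ProfiniteCompletion (ZModSemidirect n u)) :
    scaleCompletion hu' hu hw' hw'c (scaleCompletion hu hu' hw hwc x) = x := by
  ext N
  have hN : N.1.index ≠ 0 := N.2.2
  change finiteQuotientMap (levelSubgroup_le hu N) (scaleQuot hu' hu (hw' _ hN) _ hN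
    (scaleCoord hu hu' w hw (levelSubgroup hu' _ hN) x)) = _
  rw [scaleCoord_eq hu hu' hw hwc x _ hN le_rfl, finiteQuotientMap_refl,
    scaleQuot_scaleQuot hu hu' _ _ _ _ (hinv _ (mul_ne_zero (NeZero.ne p) hN)),
    ProfiniteCompletion.finiteQuotientMap_eval]

end Scale

lemma exists_continuous_mulEquiv (hu : u ^ p = 1) (hu' : u' ^ p = 1) {w w' : ℕ → ℤ}
    (hw : ∀ c : ℕ, c ≠ 0 → u' ^ w (p * c) = u) (hwc : IsCompatibleExponents w)
    (hw' : ∀ c : ℕ, c ≠ 0 → u ^ w' (p * c) = u')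
    (hinv : ∀ c : ℕ, c ≠ 0 → w c * w' c ≡ 1 [ZMOD c]) :
    ∃ e : ProfiniteCompletion (ZModSemidirect n u) ≃* ProfiniteCompletion (ZModSemidirect n u'),
      Continuous e ∧ Continuous e.symm := by
  have hw'c := hwc.of_mul_modEq_one hinv
  have hinv' : ∀ c : ℕ, c ≠ 0 → w' c * w c ≡ 1 [ZMOD c] := fun c hc => by
    rw [mul_comm]; exact hinv c hc
  refine ⟨{ toFun := scaleCompletion hu hu' hw hwc
            invFun := scaleCompletion hu' hu hw' hw'c
            left_inv := scaleCompletion_scaleCompletion hu hu' hw hwc hw' hw'c hinv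
            right_inv := scaleCompletion_scaleCompletion hu' hu hw' hw'c hw hwc hinv'
            map_mul' := map_mul _ }, continuous_scaleCompletion hu hu' hw hwc,
    continuous_scaleCompletion hu' hu hw' hw'c⟩

end Completion

section MulEquiv

variable [NeZero n] {u' : (ZMod n)ˣ}

lemma right_map_mk_zero (φ : ZModSemidirect n u ≃* ZModSemidirect n u') (a : ZMod n) :
    (φ ⟨a, 0⟩).right = 0 := by
  refine right_eq_zero_of_pow_eq_one (NeZero.ne n) ?_
  rw [← map_pow, mk_zero_pow, ZMod.natCast_self, zero_mul]
  exact map_one φ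

lemma right_map (φ : ZModSemidirect n u ≃* ZModSemidirect n u') (x : ZModSemidirect n u) :
    (φ x).right = (φ ⟨0, 1⟩).right * x.right := by
  have hx : x = ⟨x.left, 0⟩ * ⟨0, 1⟩ ^ x.right := by
    rw [zero_mk_zpow, mul_one, ← eq_mk_mul_mk]
  rw [hx, map_mul, map_zpow, mul_right, right_map_mk_zero, zpow_right]
  simp [mul_comm]

lemma right_map_eq_one_or_neg_one (φ : ZModSemidirect n u ≃* ZModSemidirect n u') :
    (φ ⟨0, 1⟩).right = 1 ∨ (φ ⟨0, 1⟩).right = -1 := by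
  obtain ⟨s, hs⟩ := φ.surjective ⟨0, 1⟩
  have h := right_map φ s
  rw [hs] at h
  exact Int.isUnit_iff.mp (IsUnit.of_mul_eq_one _ h.symm)

lemma map_mk_zero (φ : ZModSemidirect n u ≃* ZModSemidirect n u') (a : ZMod n) :
    φ ⟨a, 0⟩ = ⟨(φ ⟨a, 0⟩).left, 0⟩ :=
  ZModSemidirect.ext rfl (right_map_mk_zero φ a)

lemma isUnit_left_map (φ : ZModSemidirect n u ≃* ZModSemidirect n u') :
    IsUnit (φ ⟨1, 0⟩).left := by
  set t := (φ.symm ⟨1, 0⟩).left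
  have h : φ ⟨t, 0⟩ = ⟨1, 0⟩ := by
    rw [← map_mk_zero φ.symm, MulEquiv.apply_symm_apply]
  rw [mk_zero_eq_pow, map_pow, map_mk_zero, mk_zero_pow, ZMod.natCast_zmod_val] at h
  exact IsUnit.of_mul_eq_one_right _ (congrArg left h)

lemma zpow_right_map (φ : ZModSemidirect n u ≃* ZModSemidirect n u') :
    u' ^ (φ ⟨0, 1⟩).right = u := by
  have hconj : (⟨0, 1⟩ * ⟨1, 0⟩ * (⟨0, 1⟩)⁻¹ : ZModSemidirect n u) = ⟨1, 0⟩ ^ (u : ZMod n).val := by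
    rw [conj_eq, ← mk_zero_eq_pow]
    ext <;> simp
  have h := congrArg (fun x => (φ x).left) hconj
  simp only [map_mul, map_inv, map_pow] at h
  rw [map_mk_zero φ, conj_eq, mk_zero_pow, ZMod.natCast_zmod_val] at h
  simp only [zpow_zero, Units.val_one, one_mul, add_sub_cancel_left] at h
  exact Units.ext ((isUnit_left_map φ).mul_left_injective h)

lemma eq_or_eq_inv_of_mulEquiv (φ : ZModSemidirect n u ≃* ZModSemidirect n u') :
    u = u' ∨ u = u'⁻¹ := by
  rw [← zpow_right_map φ]
  rcases right_map_eq_one_or_neg_one φ with h | h <;> simp [h]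

end MulEquiv

theorem exists_continuous_mulEquiv_pow [NeZero n] {p : ℕ} (hp : p.Prime) (hu : u ^ p = 1) {k : ℕ}
    (hk : ¬ p ∣ k) :
    ∃ e : ProfiniteCompletion (ZModSemidirect n (u ^ k)) ≃*
        ProfiniteCompletion (ZModSemidirect n u),
      Continuous e ∧ Continuous e.symm := by
  have : NeZero p := ⟨hp.ne_zero⟩
  set w : ℕ → ℤ := fun c => crtExponent hp k c
  have hpc {c : ℕ} (hc : c ≠ 0) : p * c ≠ 0 := mul_ne_zero hp.ne_zero hc
  have hwk {c : ℕ} (hc : c ≠ 0) : w (p * c) ≡ k [ZMOD p] :=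
    Int.natCast_modEq_iff.mpr (crtExponent_modEq_of_dvd hp k (dvd_mul_right p c) (hpc hc))
  have hinv (c : ℕ) (_ : c ≠ 0) : w c * Int.gcdA (w c) c ≡ 1 [ZMOD c] :=
    mul_gcdA_modEq_one (Nat.isCoprime_iff_coprime.mpr (coprime_crtExponent hp k hk c))
  refine exists_continuous_mulEquiv (by rw [← pow_mul, mul_comm, pow_mul, hu, one_pow]) hu
    (fun c hc => by rw [zpow_eq_zpow_of_modEq hu (hwk hc), zpow_natCast])
    (isCompatibleExponents_crtExponent hp k) (fun c hc => ?_) hinv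
  have hk_inv : (k : ℤ) * Int.gcdA (w (p * c)) ((p * c : ℕ) : ℤ) ≡ 1 [ZMOD p] :=
    ((hwk hc).symm.mul_right _).trans
      ((hinv _ (hpc hc)).of_dvd (Int.natCast_dvd_natCast.mpr (dvd_mul_right p c)))
  rw [← zpow_natCast, ← zpow_mul, zpow_eq_zpow_of_modEq hu hk_inv, zpow_one]

end ZModSemidirect

/-- There exist finitely generated residually finite groups that are not isomorphic but whose
profinite completions are isomorphic as topological groups. -/
theorem exists_nonisomorphic_fg_residually_finite_with_isomorphic_profinite_completions :
    ∃ (G H : Type) (instG : Group G) (instH : Group H),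
      letI := instG
      letI := instH
      Group.FG G ∧ Group.FG H ∧ ResiduallyFinite G ∧ ResiduallyFinite H ∧
      IsEmpty (G ≃* H) ∧
      ∃ e : ProfiniteCompletion G ≃* ProfiniteCompletion H,
        Continuous e ∧ Continuous e.symm := by
  obtain ⟨e, he, he_symm⟩ := ZModSemidirect.exists_continuous_mulEquiv_pow (k := 3) Nat.prime_five
    (u := (⟨11, 16, by decide, by decide⟩ : (ZMod 25)ˣ)) (by decide) (by decide)
  refine ⟨_, _, _, _, ZModSemidirect.fg, ZModSemidirect.fg, ZModSemidirect.residuallyFinite,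
    ZModSemidirect.residuallyFinite, ⟨fun φ => ?_⟩, e, he, he_symm⟩
  -- `11 ^ 3 = 6` is neither `11` nor `11⁻¹ = 16`
  have h := ZModSemidirect.eq_or_eq_inv_of_mulEquiv φ
  revert h
  decide
end

section
/- Let A be an abelian group, viewed as a discrete topological group, such that every element of A has finite order. Then the Pontryagin dual A* of A is a compact and totally disconnected topological group (i.e., A* is profinite). -/
/-!
Compactness of the dual of a discrete group is already a Mathlib instance (the dual is a closed
subset of the compact product `Circle ^ A`). For total disconnectedness, a character sends `a` to a
root of unity of order dividing `orderOf a`, so `χ ↦ (χ a)ₐ` is a continuous injection of the dual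
into a product of finite discrete spaces.
-/

open Polynomial in
theorem Circle.finite_setOf_pow_eq_one {n : ℕ} (hn : 0 < n) : {z : Circle | z ^ n = 1}.Finite :=
  ((nthRootsFinset n (1 : ℂ)).finite_toSet.preimage Circle.coe_injective.injOn).subset
    fun _ hz => (mem_nthRootsFinset hn 1).2 (congrArg ((↑) : Circle → ℂ) hz.out)

theorem PontryaginDual.totallyDisconnectedSpace_of_isOfFinOrder {A : Type*} [Monoid A]
    [TopologicalSpace A] (htor : ∀ a : A, IsOfFinOrder a) :
    TotallyDisconnectedSpace (PontryaginDual A) := by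
  let roots (a : A) : Set Circle := {z | z ^ orderOf a = 1}
  let eval (χ : PontryaginDual A) (a : A) : roots a :=
    ⟨χ a, by rw [Set.mem_ofPred_eq, ← map_pow, pow_orderOf_eq_one, _root_.map_one]⟩
  have (a : A) : Finite (roots a) :=
    (Circle.finite_setOf_pow_eq_one (htor a).orderOf_pos).to_subtype
  have heval_cont : Continuous eval :=
    continuous_pi fun a => (continuous_eval_const (F := A →ₜ* Circle) a).subtype_mk _
  have heval_inj : Function.Injective eval := fun χ ψ h =>
    PontryaginDual.ext fun a => congrArg Subtype.val (congrFun h a)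
  exact ⟨isTotallyDisconnected_of_image heval_cont.continuousOn heval_inj
    (isTotallyDisconnected_of_totallyDisconnectedSpace _)⟩

/-- The Pontryagin dual of a discrete abelian torsion group is compact and totally
disconnected (i.e. profinite). -/
theorem pontryaginDual_of_discrete_torsion_profinite
    (A : Type*) [CommGroup A] [TopologicalSpace A] [DiscreteTopology A]
    (htor : ∀ a : A, IsOfFinOrder a) :
    CompactSpace (PontryaginDual A) ∧ TotallyDisconnectedSpace (PontryaginDual A) :=
  ⟨inferInstance, PontryaginDual.totallyDisconnectedSpace_of_isOfFinOrder htor⟩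
end

section
/- Let A and B be countable abelian groups, viewed as discrete topological groups, in which every element has finite order. Then A and B are isomorphic as groups if and only if their Pontryagin duals A* and B* are isomorphic as topological groups (i.e., there is a group isomorphism A* → B* that is a homeomorphism). -/
/-!
Isomorphisms of discrete groups are topological, so they dualize. Conversely, an isomorphism
`A* ≃ B*` dualizes to `A** ≃ B**`, and evaluation `A → A**` is an isomorphism for discrete torsion
abelian groups.

Injectivity of evaluation: the circle is divisible, hence an injective `ℤ`-module, so characters
extend from the finite cyclic subgroup generated by `a ≠ 1`, where finite duality separates `a`
from `1`. Surjectivity: a continuous character `χ` of `A*` maps some basic neighbourhood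
`{ψ | ψ = 1 on F}`, `F` finite, into the open half circle, which contains no nontrivial subgroup.
So `χ` kills every character trivial on the subgroup `H` generated by `F`, which is finite because
`A` is torsion; thus `χ` factors through the restriction `A* → Ĥ`, and finite duality for `H`
makes it the evaluation at a point of `H`.
-/

open Function Filter Topology

noncomputable instance : DivisibleBy (Additive Circle) ℤ :=
  Circle.exp_surjective.divisibleBy Circle.expHom fun t n => map_zsmul Circle.expHom n t

namespace Circle

theorem domRestrictHom_surjective {A : Type*} [CommGroup A] (H : Subgroup A) :
    Surjective (MonoidHom.domRestrictHom H Circle) := by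
  intro φ
  obtain ⟨ψ, hψ⟩ := (Module.Baer.of_divisible (Additive Circle)).extension_property_addMonoidHom
    (MonoidHom.toAdditive H.subtype) (fun _ _ h => Subtype.ext h) (MonoidHom.toAdditive φ)
  exact ⟨MonoidHom.toAdditive.symm ψ, MonoidHom.ext fun h => DFunLike.congr_fun hψ h⟩

section Finite

variable {H : Type*} [CommGroup H] [Finite H]

theorem exists_monoidHom_apply_ne_one {a : H} (ha : a ≠ 1) : ∃ φ : H →* Circle, φ a ≠ 1 := by
  have : NeZero (Monoid.exponent H) := ⟨Monoid.exponent_ne_zero_of_finite⟩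
  obtain ⟨φ, hφ⟩ := CommGroup.exists_apply_ne_one_of_hasEnoughRootsOfUnity H Circle ha
  exact ⟨_root_.toUnits.symm.toMonoidHom.comp φ, by simpa using hφ⟩

theorem exists_forall_eq_apply (η : (H →* Circle) →* Circle) : ∃ h : H, ∀ φ, η φ = φ h := by
  have : NeZero (Monoid.exponent H) := ⟨Monoid.exponent_ne_zero_of_finite⟩
  let e : (H →* Circle) ≃* (H →* Circleˣ) := MulEquiv.monoidHomCongrRight _root_.toUnits
  let η' : (H →* Circleˣ) →* Circleˣ := (_root_.toUnits.toMonoidHom.comp η).comp e.symm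
  refine ⟨CommGroup.monoidHomMonoidHomEquiv H Circle η', fun φ => ?_⟩
  exact _root_.toUnits.injective
    (CommGroup.apply_monoidHomMonoidHomEquiv (M := Circle) (e φ) η').symm

end Finite

theorem subgroup_eq_bot_of_subset_centeredArc {S : Subgroup Circle}
    (hS : (S : Set Circle) ⊆ centeredArc (Real.pi / 2)) : S = ⊥ := by
  have hsmall : ∀ n : ℕ, ∀ z ∈ S, z ∈ centeredArc (Real.pi / 2 ^ (n + 1)) := by
    intro n
    induction n with
    | zero => exact fun z hz => by simpa using hS hz
    | succ n ih =>
      intro z hz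
      have := mem_centeredArc_div (n := 2) (by bound) (by simpa using hS hz)
        (ih _ (S.pow_mem hz 2))
      rwa [Nat.cast_ofNat, div_div, ← pow_succ] at this
  refine (Subgroup.eq_bot_iff_forall S).2 fun z hz => ?_
  by_contra hz1
  obtain ⟨n, -, hn⟩ := hasBasis_centeredArc_div_two_pow.mem_iff.1
    (isOpen_compl_singleton.mem_nhds (Ne.symm hz1))
  exact hn (hsmall n z hz) rfl

end Circle

theorem IsOfFinOrder.exists_monoidHom_circle_apply_ne_one {A : Type*} [CommGroup A] {a : A}
    (ha : IsOfFinOrder a) (ha1 : a ≠ 1) : ∃ ψ : A →* Circle, ψ a ≠ 1 := by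
  have : Finite (Subgroup.zpowers a) := ha.finite_zpowers.to_subtype
  obtain ⟨φ, hφ⟩ := Circle.exists_monoidHom_apply_ne_one
    (a := (⟨a, Subgroup.mem_zpowers a⟩ : Subgroup.zpowers a)) (by simpa using ha1)
  obtain ⟨ψ, rfl⟩ := Circle.domRestrictHom_surjective _ φ
  exact ⟨ψ, hφ⟩

namespace PontryaginDual

variable {A B : Type*} [CommGroup A] [TopologicalSpace A] [CommGroup B] [TopologicalSpace B]

noncomputable def congr (e : A ≃ₜ* B) : PontryaginDual A ≃ₜ* PontryaginDual B where
  toFun := map (e.symm : B →ₜ* A)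
  invFun := map (e : A →ₜ* B)
  left_inv χ := ext fun a => congrArg χ (e.symm_apply_apply a)
  right_inv χ := ext fun b => congrArg χ (e.apply_symm_apply b)
  map_mul' := _root_.map_mul _
  continuous_toFun := map_continuous _
  continuous_invFun := map_continuous _

variable (A) in
noncomputable def doubleDualHom : A →* PontryaginDual (PontryaginDual A) where
  toFun a :=
    { toFun := fun ψ => ψ a
      map_one' := rfl
      map_mul' _ _ := rfl
      continuous_toFun := (continuous_eval_const a : Continuous fun ψ : A →ₜ* Circle => ψ a) }
  map_one' := ext fun ψ => _root_.map_one ψ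
  map_mul' a b := ext fun ψ => _root_.map_mul ψ a b

variable [DiscreteTopology A]

noncomputable def restrict (H : Subgroup A) : PontryaginDual A →* (H →* Circle) where
  toFun ψ := (ψ : A →* Circle).domRestrict H
  map_one' := rfl
  map_mul' _ _ := rfl

theorem restrict_surjective (H : Subgroup A) : Surjective (restrict H) := by
  intro φ
  obtain ⟨ψ, rfl⟩ := Circle.domRestrictHom_surjective H φ
  exact ⟨⟨ψ, continuous_of_discreteTopology⟩, rfl⟩

theorem exists_finset_subset_of_mem_nhds_one {N : Set (PontryaginDual A)} (hN : N ∈ 𝓝 1) :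
    ∃ F : Finset A, {ψ : PontryaginDual A | ∀ a ∈ F, ψ a = 1} ⊆ N := by
  have hind : IsInducing ((⇑) : PontryaginDual A → A → Circle) :=
    ContinuousMonoidHom.isClosedEmbedding_coe.isInducing
  rw [hind.nhds_eq_comap, mem_comap] at hN
  obtain ⟨S, hS, hSN⟩ := hN
  rw [nhds_pi, Filter.mem_pi'] at hS
  obtain ⟨F, t, ht, hFt⟩ := hS
  refine ⟨F, fun ψ hψ => hSN (hFt fun a ha => ?_)⟩
  rw [hψ a ha]
  exact mem_of_mem_nhds (ht a)

theorem exists_finset_forall_apply_eq_one (χ : PontryaginDual (PontryaginDual A)) :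
    ∃ F : Finset A, ∀ ψ : PontryaginDual A, (∀ a ∈ F, ψ a = 1) → χ ψ = 1 := by
  have hU : χ ⁻¹' Circle.centeredArc (Real.pi / 2) ∈ 𝓝 1 := by
    refine (map_continuous χ).continuousAt.preimage_mem_nhds ?_
    rw [_root_.map_one]
    simpa using Circle.hasBasis_centeredArc_div_two_pow.mem_of_mem (i := 0) trivial
  obtain ⟨F, hF⟩ := exists_finset_subset_of_mem_nhds_one hU
  let K : Subgroup (PontryaginDual A) :=
    { carrier := {ψ | ∀ a ∈ F, ψ a = 1}
      mul_mem' := fun {ψ φ} hψ hφ a ha => show ψ a * φ a = 1 by rw [hψ a ha, hφ a ha, one_mul]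
      one_mem' := fun _ _ => rfl
      inv_mem' := fun {ψ} hψ a ha => show (ψ a)⁻¹ = 1 by rw [hψ a ha, inv_one] }
  have hK : K.map χ.toMonoidHom = ⊥ := by
    refine Circle.subgroup_eq_bot_of_subset_centeredArc ?_
    rintro _ ⟨ψ, hψ, rfl⟩
    exact hF hψ
  exact ⟨F, fun ψ hψ => (Subgroup.map_eq_bot_iff _).1 hK hψ⟩

theorem doubleDualHom_injective (hA : IsMulTorsion A) : Injective (doubleDualHom A) := by
  refine (injective_iff_map_eq_one _).2 fun a ha => ?_
  by_contra ha1
  obtain ⟨ψ, hψ⟩ := (hA a).exists_monoidHom_circle_apply_ne_one ha1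
  exact hψ (DFunLike.congr_fun ha ⟨ψ, continuous_of_discreteTopology⟩)

theorem doubleDualHom_surjective (hA : IsMulTorsion A) : Surjective (doubleDualHom A) := by
  intro χ
  obtain ⟨F, hF⟩ := exists_finset_forall_apply_eq_one χ
  let H := Subgroup.closure (F : Set A)
  have : Group.FG H := Group.closure_finset_fg F
  have : Finite H := CommGroup.finite_of_fg_isMulTorsion H (hA.subgroup H)
  have hker : (restrict H).ker ≤ χ.toMonoidHom.ker := fun ψ hψ =>
    hF ψ fun a ha => DFunLike.congr_fun hψ ⟨a, Subgroup.subset_closure ha⟩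
  let η := (restrict H).liftOfSurjective (restrict_surjective H) ⟨χ.toMonoidHom, hker⟩
  obtain ⟨h, hh⟩ := Circle.exists_forall_eq_apply η
  refine ⟨h, ext fun ψ => ?_⟩
  calc doubleDualHom A h ψ = restrict H ψ h := rfl
    _ = η (restrict H ψ) := (hh _).symm
    _ = χ ψ := MonoidHom.liftOfRightInverse_comp_apply _ _ _ _ ψ

noncomputable def doubleDualEquiv (hA : IsMulTorsion A) :
    A ≃* PontryaginDual (PontryaginDual A) :=
  .ofBijective (doubleDualHom A) ⟨doubleDualHom_injective hA, doubleDualHom_surjective hA⟩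

end PontryaginDual

theorem pontryaginDual_iso_iff_general
    (A B : Type*) [CommGroup A] [CommGroup B]
    [TopologicalSpace A] [DiscreteTopology A] [TopologicalSpace B] [DiscreteTopology B]
    (hA : ∀ a : A, IsOfFinOrder a) (hB : ∀ b : B, IsOfFinOrder b) :
    Nonempty (A ≃* B) ↔
      ∃ e : PontryaginDual A ≃* PontryaginDual B, Continuous e ∧ Continuous e.symm := by
  constructor
  · rintro ⟨i⟩
    let e := PontryaginDual.congr
      ⟨i, continuous_of_discreteTopology, continuous_of_discreteTopology⟩
    exact ⟨e, e.continuous, e.symm.continuous⟩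
  · rintro ⟨e, he, he'⟩
    exact ⟨(PontryaginDual.doubleDualEquiv hA).trans <|
      (PontryaginDual.congr ⟨e, he, he'⟩ : _ ≃* _).trans (PontryaginDual.doubleDualEquiv hB).symm⟩

/-- Two countable discrete abelian torsion groups are isomorphic iff their Pontryagin duals
are isomorphic as topological groups. -/
theorem pontryaginDual_iso_iff
    (A B : Type*) [CommGroup A] [CommGroup B] [Countable A] [Countable B]
    [TopologicalSpace A] [DiscreteTopology A] [TopologicalSpace B] [DiscreteTopology B]
    (hA : ∀ a : A, IsOfFinOrder a) (hB : ∀ b : B, IsOfFinOrder b) :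
    Nonempty (A ≃* B) ↔
      ∃ e : PontryaginDual A ≃* PontryaginDual B, Continuous e ∧ Continuous e.symm :=
  pontryaginDual_iso_iff_general A B hA hB
end

section
/- The equivalence relation E_0 of eventual equality on Cantor space is not smooth: there is no Borel measurable function f : (ℕ → {0,1}) → ℝ such that for all x, y, (x(n) = y(n) for all but finitely many n) if and only if f(x) = f(y). -/
/-!
The finite bit flips act on Cantor space by homeomorphisms with dense orbits, so an
`E₀`-invariant set with the Baire property is meagre or comeagre (generic ergodicity). Applied to
the preimages under `f` of Borel sets, which separate the points of `ℝ` and are countably generated,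
this makes `f` constant on a comeagre set `f ⁻¹' {c}`. But every `E₀`-class is countable, hence
meagre, so `f ⁻¹' {c}` meets two different classes.
-/

open Set Filter Topology

theorem isMeagre_or_mem_residual_of_denseRange {X ι : Type*} [TopologicalSpace X] [Countable ι]
    {g : ι → X → X} (hcont : ∀ i, Continuous (g i)) (hopen : ∀ i, IsOpenMap (g i))
    (hdense : ∀ x, DenseRange (g · x)) {A : Set X} (hA : BaireMeasurableSet A)
    (hinv : ∀ i, g i ⁻¹' A = A) : IsMeagre A ∨ A ∈ residual X := by
  obtain ⟨U, hUopen, hAU⟩ := hA.residualEq_isOpen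
  rcases U.eq_empty_or_nonempty with rfl | hUne
  · left
    filter_upwards [hAU] with x hx using hx.to_iff.not.2 id
  · right
    have hUA : IsMeagre (U \ A) := by
      filter_upwards [hAU] with x hx hxUA using hxUA.2 (hx.to_iff.2 hxUA.1)
    have hcover : Aᶜ ⊆ ⋃ i, g i ⁻¹' (U \ A) := fun x hx ↦ by
      obtain ⟨i, hi⟩ := (hdense x).exists_mem_open hUopen hUne
      exact mem_iUnion.2 ⟨i, hi, by rwa [← mem_preimage, hinv]⟩
    simpa [IsMeagre] using
      (isMeagre_iUnion fun i ↦ hUA.preimage_of_isOpenMap (hcont i) (hopen i)).mono hcover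

theorem Set.Countable.isMeagre {X : Type*} [TopologicalSpace X] [T1Space X] [PerfectSpace X]
    {s : Set X} (hs : s.Countable) : IsMeagre s := by
  simpa using isMeagre_biUnion hs fun x _ ↦
    (isClosed_singleton.isNowhereDense_iff.2 (interior_singleton x)).isMeagre

namespace Cantor

def flipOn (s : Finset ℕ) (x : ℕ → Bool) : ℕ → Bool := fun n ↦ if n ∈ s then !x n else x n

theorem flipOn_involutive (s : Finset ℕ) : Function.Involutive (flipOn s) := fun x ↦ by
  funext n; by_cases h : n ∈ s <;> simp [flipOn, h]

theorem continuous_flipOn (s : Finset ℕ) : Continuous (flipOn s) :=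
  continuous_pi fun n ↦
    (continuous_of_discreteTopology (f := fun b : Bool ↦ if n ∈ s then !b else b)).comp
      (continuous_apply n)

theorem isOpenMap_flipOn (s : Finset ℕ) : IsOpenMap (flipOn s) := fun U hU ↦ by
  rw [(flipOn_involutive s).image_eq_preimage_symm]
  exact hU.preimage (continuous_flipOn s)

theorem setOf_ne_flipOn (s : Finset ℕ) (x : ℕ → Bool) : {n | x n ≠ flipOn s x n} = s := by
  ext n; by_cases h : n ∈ s <;> simp [flipOn, h]

theorem range_flipOn (x : ℕ → Bool) : range (flipOn · x) = {y | {n | x n ≠ y n}.Finite} := by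
  ext y
  refine ⟨?_, fun hy ↦ ⟨hy.toFinset, funext fun n ↦ ?_⟩⟩
  · rintro ⟨s, rfl⟩
    simpa only [mem_ofPred_eq, setOf_ne_flipOn] using s.finite_toSet
  · by_cases h : x n = y n <;> simp_all [flipOn, Bool.eq_not_iff]

theorem tendsto_flipOn_atTop {s : ℕ → Finset ℕ} (x u : ℕ → Bool)
    (h : ∀ n, ∀ᶠ N in atTop, flipOn (s N) x n = u n) :
    Tendsto (fun N ↦ flipOn (s N) x) atTop (𝓝 u) :=
  tendsto_pi_nhds.2 fun n ↦ tendsto_const_nhds.congr' ((h n).mono fun _ h ↦ h.symm)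

theorem denseRange_flipOn (x : ℕ → Bool) : DenseRange (flipOn · x) := fun u ↦ by
  refine mem_closure_of_tendsto (tendsto_flipOn_atTop (s := fun N ↦
    {n ∈ Finset.range N | x n ≠ u n}) x u fun n ↦ ?_) (.of_forall fun N ↦ mem_range_self _)
  filter_upwards [eventually_gt_atTop n] with N hN
  by_cases h : x n = u n <;> simp_all [flipOn, Bool.eq_not_iff]

instance : PerfectSpace (ℕ → Bool) := perfectSpace_iff_forall_not_isolated.2 fun x ↦ by
  rw [← mem_closure_iff_nhdsWithin_neBot]
  refine mem_closure_of_tendsto (tendsto_flipOn_atTop (s := fun N ↦ {N}) x x fun n ↦ ?_)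
    (.of_forall fun N h ↦ ?_)
  · filter_upwards [eventually_gt_atTop n] with N hN
    simp [flipOn, hN.ne]
  · simpa [flipOn] using congrFun h N

theorem isMeagre_or_mem_residual_of_e0_invariant {A : Set (ℕ → Bool)} (hA : BaireMeasurableSet A)
    (hinv : ∀ x y, {n | x n ≠ y n}.Finite → (x ∈ A ↔ y ∈ A)) :
    IsMeagre A ∨ A ∈ residual (ℕ → Bool) :=
  isMeagre_or_mem_residual_of_denseRange continuous_flipOn isOpenMap_flipOn denseRange_flipOn hA
    fun s ↦ ext fun x ↦ (hinv x _ (setOf_ne_flipOn s x ▸ s.finite_toSet)).symm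

end Cantor

open Cantor

/-- The equivalence relation `E₀` of eventual equality on Cantor space is not smooth: no Borel
measurable function `f : 2^ℕ → ℝ` satisfies `x E₀ y ↔ f x = f y`. -/
theorem e0_not_smooth :
    ¬ ∃ f : (ℕ → Bool) → ℝ,
        @Measurable _ _ (borel (ℕ → Bool)) _ f ∧
        ∀ x y : ℕ → Bool, {n : ℕ | x n ≠ y n}.Finite ↔ f x = f y := by
  rintro ⟨f, hf, hE⟩
  borelize (ℕ → Bool)
  have hzeroOne : ∀ U : Set ℝ, MeasurableSet U →
      (∀ᶠ x in residual _, f x ∈ U) ∨ ∀ᶠ x in residual _, f x ∉ U := fun U hU ↦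
    (isMeagre_or_mem_residual_of_e0_invariant (hf hU).baireMeasurableSet
      fun x y hxy ↦ by simp only [mem_preimage, (hE x y).1 hxy]).symm
  obtain ⟨c, hc⟩ := exists_eventuallyEq_const_of_forall_separating MeasurableSet hzeroOne
  obtain ⟨x, hx⟩ := (dense_of_mem_residual hc).nonempty
  have hclass : {y : ℕ → Bool | {n | x n ≠ y n}.Finite}.Countable :=
    range_flipOn x ▸ countable_range _
  obtain ⟨y, hy, hxy⟩ := (dense_of_mem_residual (hc.and hclass.isMeagre)).nonempty
  exact hxy ((hE x y).2 (hx.trans hy.symm))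
end

section
/- Let G be a topological group that is topologically finitely generated, i.e., there is a finite subset S of G such that the subgroup generated by S is dense in G. Then for every natural number n, the set of open subgroups of G of index at most n is finite. -/
/-!
A subgroup `K` of index at most `n` in a group `Γ` is the stabilizer of a point for the action
of `Γ` on `Γ ⧸ K ↪ Fin n`, so it is determined by a homomorphism `Γ →* Equiv.Perm (Fin n)` and a
point of `Fin n`. When `Γ` is finitely generated there are only finitely many such homomorphisms,
hence finitely many such `K`.

In a topological group `G` with a dense finitely generated subgroup `Γ`, an open subgroup `H` is
clopen, hence the closure of `H ∩ Γ`; so `H ↦ H ⊓ Γ` is injective on open subgroups, and it does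
not increase the index.
-/

open Subgroup

section Group

variable {Γ : Type*} [Group Γ]

instance MonoidHom.finite_of_fg [Group.FG Γ] {M : Type*} [Monoid M] [Finite M] :
    Finite (Γ →* M) := by
  obtain ⟨S, hS⟩ := Group.fg_def.mp ‹Group.FG Γ›
  refine Finite.of_injective (fun φ : Γ →* M => fun s : S => φ s) fun φ ψ h => ?_
  exact MonoidHom.eq_of_eqOn_dense hS fun s hs => congrFun h ⟨s, hs⟩

theorem Subgroup.exists_monoidHom_perm_fin_mem_iff {K : Subgroup Γ} {n : ℕ} (hK0 : K.index ≠ 0)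
    (hKn : K.index ≤ n) :
    ∃ (φ : Γ →* Equiv.Perm (Fin n)) (x : Fin n), ∀ g, g ∈ K ↔ φ g x = x := by
  have : K.FiniteIndex := ⟨hK0⟩
  let i : Γ ⧸ K ↪ Fin n := (Finite.equivFinOfCardEq rfl).toEmbedding.trans (Fin.castLEEmb hKn)
  refine ⟨(Equiv.Perm.viaEmbeddingHom i).comp (MulAction.toPermHom Γ (Γ ⧸ K)),
    i ((1 : Γ) : Γ ⧸ K), fun g => ?_⟩
  rw [MonoidHom.comp_apply, Equiv.Perm.viaEmbeddingHom_apply, Equiv.Perm.viaEmbedding_apply,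
    i.injective.eq_iff, MulAction.toPermHom_apply, MulAction.toPerm_apply,
    MulAction.Quotient.smul_mk, smul_eq_mul, mul_one, eq_comm, QuotientGroup.eq]
  simp

theorem Subgroup.finite_setOf_index_le [Group.FG Γ] (n : ℕ) :
    {K : Subgroup Γ | K.index ≠ 0 ∧ K.index ≤ n}.Finite := by
  choose φ x hφx using fun K : {K : Subgroup Γ | K.index ≠ 0 ∧ K.index ≤ n} =>
    exists_monoidHom_perm_fin_mem_iff K.2.1 K.2.2
  refine Set.finite_coe_iff.mp (Finite.of_injective (fun K => (φ K, x K)) fun K L h => ?_)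
  obtain ⟨hφ, hx⟩ := Prod.mk.inj h
  exact Subtype.ext (Subgroup.ext fun g => by rw [hφx K, hφx L, hφ, hx])

theorem Subgroup.relIndex_le_index {H : Subgroup Γ} (K : Subgroup Γ) (hH : H.index ≠ 0) :
    H.relIndex K ≤ H.index := by
  rw [← relIndex_top_right] at hH ⊢
  exact relIndex_le_of_le_right le_top hH

end Group

theorem IsClopen.closure_inter_of_dense {X : Type*} [TopologicalSpace X] {U D : Set X}
    (hU : IsClopen U) (hD : Dense D) : closure (U ∩ D) = U :=
  (closure_minimal Set.inter_subset_left hU.isClosed).antisymm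
    (hD.open_subset_closure_inter hU.isOpen)

theorem Subgroup.injOn_subgroupOf_of_dense {G : Type*} [Group G] [TopologicalSpace G]
    [SeparatelyContinuousMul G] {K : Subgroup G} (hK : Dense (K : Set G)) :
    {H : Subgroup G | IsOpen (H : Set G)}.InjOn (·.subgroupOf K) := by
  intro H₁ hH₁ H₂ hH₂ h
  have hinf : ((H₁ ⊓ K : Subgroup G) : Set G) = (H₂ ⊓ K : Subgroup G) :=
    congrArg SetLike.coe (subgroupOf_inj.mp h)
  rw [coe_inf, coe_inf] at hinf
  apply SetLike.ext'
  rw [← IsClopen.closure_inter_of_dense ⟨H₁.isClosed_of_isOpen hH₁, hH₁⟩ hK,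
    ← IsClopen.closure_inter_of_dense ⟨H₂.isClosed_of_isOpen hH₂, hH₂⟩ hK, hinf]

/-- In a topologically finitely generated topological group, for every `n` there are only
finitely many open subgroups of index at most `n`. -/
theorem finitely_many_open_subgroups_of_bounded_index
    (G : Type*) [Group G] [TopologicalSpace G] [IsTopologicalGroup G]
    (hfg : ∃ S : Finset G, Dense ((Subgroup.closure (S : Set G) : Subgroup G) : Set G))
    (n : ℕ) :
    {H : Subgroup G | IsOpen (H : Set G) ∧ H.index ≠ 0 ∧ H.index ≤ n}.Finite := by
  obtain ⟨S, hS⟩ := hfg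
  set Γ := Subgroup.closure (S : Set G)
  refine Set.Finite.of_finite_image ?_ ((injOn_subgroupOf_of_dense hS).mono fun H hH => hH.1)
  refine (finite_setOf_index_le (Γ := Γ) n).subset ?_
  rintro _ ⟨H, ⟨-, hH0, hHn⟩, rfl⟩
  have : H.FiniteIndex := ⟨hH0⟩
  exact ⟨FiniteIndex.index_ne_zero, (relIndex_le_index Γ hH0).trans hHn⟩
end

section
/- Every second countable profinite group G has a generating sequence converging to 1: there is a sequence (g_i)_{i∈ℕ} of elements of G such that g_i → 1 in the topology of G and the closure of the subgroup generated by {g_i : i ∈ ℕ} is all of G. -/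
/-!
Fix a decreasing basis `G = N₀ ⊇ N₁ ⊇ ⋯` of open subgroups at `1`. By compactness, `N n` is
covered by finitely many cosets `N (n + 1) * t` with `t` in a finite set `T n ⊆ N n`. Since
`T n ⊆ N n`, any enumeration of `⋃ n, T n` in which each element occurs finitely often tends to
`1`, and the subgroup `H` it generates satisfies `N n * H = G` for all `n` by induction, so `H`
is dense.
-/

open Filter Set Topology Pointwise

theorem exists_seq_tendsto_of_tendsto_cofinite {ι X : Type*} [Countable ι] [Infinite ι]
    {f : ι → X} {l : Filter X} (hf : Tendsto f cofinite l) :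
    ∃ g : ℕ → X, Tendsto g atTop l ∧ range g = range f := by
  obtain ⟨e⟩ : Nonempty (ℕ ≃ ι) := nonempty_equiv_of_countable
  refine ⟨f ∘ e, ?_, e.surjective.range_comp f⟩
  rw [← Nat.cofinite_eq_atTop]
  exact hf.comp e.injective.tendsto_cofinite

theorem tendsto_sigma_cofinite_of_tendsto_smallSets {X : Type*} {l : Filter X}
    {T : ℕ → Finset X} (hT : Tendsto (fun n => (T n : Set X)) atTop l.smallSets) :
    Tendsto (fun i : Σ n, T n => (i.2 : X)) cofinite l := by
  intro t ht
  obtain ⟨n₀, hn₀⟩ := eventually_atTop.mp (tendsto_smallSets_iff.mp hT t ht)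
  refine ((finite_Iio n₀).biUnion fun n _ => finite_range (Sigma.mk n)).subset ?_
  rintro ⟨n, x⟩ hx
  have hn : n < n₀ := not_le.mp fun hn => hx (hn₀ n hn x.2)
  exact mem_biUnion hn ⟨x, rfl⟩

theorem exists_seq_tendsto_of_tendsto_smallSets {X : Type*} {l : Filter X}
    {T : ℕ → Finset X} (hne : ∀ n, (T n).Nonempty)
    (hT : Tendsto (fun n => (T n : Set X)) atTop l.smallSets) :
    ∃ g : ℕ → X, Tendsto g atTop l ∧ ∀ n, (T n : Set X) ⊆ range g := by
  have : Infinite (Σ n, T n) :=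
    Infinite.of_surjective Sigma.fst fun n => ⟨⟨n, (hne n).coe_sort.some⟩, rfl⟩
  obtain ⟨g, hg, hrange⟩ :=
    exists_seq_tendsto_of_tendsto_cofinite (tendsto_sigma_cofinite_of_tendsto_smallSets hT)
  exact ⟨g, hg, fun n x hx => hrange ▸ ⟨⟨n, x, hx⟩, rfl⟩⟩

section TopologicalGroup

variable {G : Type*} [Group G] [TopologicalSpace G] [IsTopologicalGroup G]

theorem IsCompact.exists_finset_subset_mul {s U : Set G} (hs : IsCompact s) (hU : U ∈ 𝓝 1) :
    ∃ t : Finset G, (t : Set G) ⊆ s ∧ s ⊆ U * t := by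
  obtain ⟨t, hts, hcover⟩ := hs.elim_nhds_subcover (fun x => (· * x⁻¹) ⁻¹' U) fun x _ =>
    (continuous_mul_const x⁻¹).continuousAt.preimage_mem_nhds (by rwa [mul_inv_cancel])
  refine ⟨t, hts, fun y hy => ?_⟩
  obtain ⟨x, hx, hyx⟩ := mem_iUnion₂.mp (hcover hy)
  exact ⟨y * x⁻¹, hyx, x, hx, inv_mul_cancel_right y x⟩

theorem dense_of_forall_mul_eq_univ {ι : Sort*} {p : ι → Prop} {N : ι → Subgroup G}
    (hN : (𝓝 1).HasBasis p fun i => (N i : Set G)) {H : Set G}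
    (hH : ∀ i, p i → (N i : Set G) * H = univ) : Dense H := by
  intro x
  rw [mem_closure_iff_nhds_basis (hN.nhds_of_one x)]
  intro i hi
  obtain ⟨y, hy, h, hh, rfl⟩ : x ∈ (N i : Set G) * H := hH i hi ▸ mem_univ x
  exact ⟨h, hh, by simpa [div_eq_mul_inv] using (N i).inv_mem hy⟩

end TopologicalGroup

theorem Subgroup.mul_eq_univ_of_subset_mul {G : Type*} [Group G] {N : ℕ → Subgroup G}
    (hN0 : N 0 = ⊤) {T : ℕ → Set G} {H : Subgroup G} (hTH : ∀ n, T n ⊆ H)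
    (hcover : ∀ n, (N n : Set G) ⊆ N (n + 1) * T n) (n : ℕ) :
    (N n : Set G) * (H : Set G) = univ := by
  induction n with
  | zero => simp [hN0]
  | succ n ih =>
    refine eq_univ_of_univ_subset ?_
    calc univ = (N n : Set G) * (H : Set G) := ih.symm
      _ ⊆ (N (n + 1) : Set G) * T n * (H : Set G) := mul_subset_mul_right (hcover n)
      _ ⊆ (N (n + 1) : Set G) * ((H : Set G) * H) := by rw [mul_assoc]; gcongr; exact hTH n
      _ = (N (n + 1) : Set G) * (H : Set G) := by
        rw [← H.coe_toSubmonoid, Submonoid.coe_mul_self_eq]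

section Profinite

variable (G : Type*) [Group G] [TopologicalSpace G] [IsTopologicalGroup G] [CompactSpace G]
  [TotallyDisconnectedSpace G]

theorem hasBasis_nhds_one_openSubgroup :
    (𝓝 (1 : G)).HasBasis (fun _ : OpenSubgroup G => True) fun H => (H : Set G) := by
  refine ⟨fun U => ⟨fun hU => ?_, fun ⟨H, _, hHU⟩ => mem_of_superset H.mem_nhds_one hHU⟩⟩
  obtain ⟨V, hVU, hV, h1V⟩ := mem_nhds_iff.mp hU
  obtain ⟨H, hHV⟩ := ProfiniteGrp.exist_openNormalSubgroup_sub_open_nhds_of_one hV h1V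
  exact ⟨H.toOpenSubgroup, trivial, hHV.trans hVU⟩

theorem exists_antitone_openSubgroup_basis_nhds_one [FirstCountableTopology G] :
    ∃ N : ℕ → OpenSubgroup G, N 0 = ⊤ ∧ (𝓝 (1 : G)).HasAntitoneBasis fun n => (N n : Set G) := by
  obtain ⟨M, -, hM⟩ := (hasBasis_nhds_one_openSubgroup G).exists_antitone_subbasis
  let N : ℕ → OpenSubgroup G := fun
    | 0 => ⊤
    | n + 1 => M n
  refine ⟨N, rfl, ⟨hM.1.to_hasBasis (fun n _ => ⟨n + 1, trivial, subset_rfl⟩) ?_, ?_⟩⟩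
  · rintro (_ | n) -
    exacts [⟨0, trivial, subset_univ _⟩, ⟨n, trivial, subset_rfl⟩]
  · refine antitone_nat_of_succ_le ?_
    rintro (_ | n)
    exacts [subset_univ _, hM.antitone n.le_succ]

end Profinite

theorem exists_generating_sequence_tendsto_one_general
    (G : Type*) [Group G] [TopologicalSpace G] [IsTopologicalGroup G]
    [CompactSpace G] [TotallyDisconnectedSpace G] [SecondCountableTopology G] :
    ∃ g : ℕ → G, Filter.Tendsto g Filter.atTop (nhds 1) ∧
      closure ((Subgroup.closure (Set.range g) : Subgroup G) : Set G) = Set.univ := by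
  obtain ⟨N, hN0, hN⟩ := exists_antitone_openSubgroup_basis_nhds_one G
  have hcover (n : ℕ) : ∃ T : Finset G, (T : Set G) ⊆ N n ∧ (N n : Set G) ⊆ N (n + 1) * T :=
    (N n).isClosed.isCompact.exists_finset_subset_mul (hN.mem (n + 1))
  choose T hTN hcover using hcover
  have hTne (n : ℕ) : (T n).Nonempty :=
    Finset.coe_nonempty.mp (nonempty_of_mem (hcover n (N n).one_mem)).of_mul_right
  obtain ⟨g, hg, hTg⟩ := exists_seq_tendsto_of_tendsto_smallSets hTne
    (hN.tendsto_smallSets.smallSets_mono (Eventually.of_forall hTN))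
  refine ⟨g, hg, (dense_of_forall_mul_eq_univ hN.1 fun n _ => ?_).closure_eq⟩
  exact Subgroup.mul_eq_univ_of_subset_mul (N := fun n => (N n : Subgroup G))
    (congrArg _ hN0) (fun n => (hTg n).trans Subgroup.subset_closure) hcover n

/-- Every second countable profinite group has a generating sequence converging to `1`: a
sequence tending to the identity whose generated subgroup is dense. -/
theorem exists_generating_sequence_tendsto_one
    (G : Type*) [Group G] [TopologicalSpace G] [IsTopologicalGroup G]
    [CompactSpace G] [T2Space G] [TotallyDisconnectedSpace G] [SecondCountableTopology G] :
    ∃ g : ℕ → G, Filter.Tendsto g Filter.atTop (nhds 1) ∧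
      closure ((Subgroup.closure (Set.range g) : Subgroup G) : Set G) = Set.univ :=
  exists_generating_sequence_tendsto_one_general G
end
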